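/- arXiv:2505.11660 — 4 statements merged into one kernel-verified Lean document; each statement's English description precedes it below -/
import Mathlib

section
/- Let p > 0, μ > 0, f, g, h, k be reals with f² + g² < 1, and let λ_p, λ_f, λ_g, λ_h, λ_k, λ_L, λ_m, m > 0, c > 0 be reals. Then the function L ↦ G(L)·w(L)², where G(L) = c²[R(L)² + T(L)² + N(L)²] − m²(1 − λ_m)², is a trigonometric polynomial of degree at most 4 in L. -/
set_option maxHeartbeats 2000000
set_option maxRecDepth 100000


noncomputable def wfun (f g L : ℝ) : ℝ := 1 + f * Real.cos L + g * Real.sin L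

noncomputable def Rfun (p μ lf lg L : ℝ) : ℝ :=
  Real.sqrt (p / μ) * (lf * Real.sin L - lg * Real.cos L)

noncomputable def Tfun (p μ f g lp lf lg L : ℝ) : ℝ :=
  Real.sqrt (p / μ) * (1 / wfun f g L) *
    (2 * p * lp + lf * ((wfun f g L + 1) * Real.cos L + f)
      + lg * ((wfun f g L + 1) * Real.sin L + g))

noncomputable def Nfun (p μ f g h k lf lg lh lk lL L : ℝ) : ℝ :=
  Real.sqrt (p / μ) * (1 / wfun f g L) *
    ((lL + f * lg - g * lf) * (h * Real.sin L - k * Real.cos L)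
      + ((1 + h ^ 2 + k ^ 2) / 2) * (lh * Real.cos L + lk * Real.sin L))

noncomputable def Gfun (p μ f g h k lp lf lg lh lk lL lm m c L : ℝ) : ℝ :=
  c ^ 2 * (Rfun p μ lf lg L ^ 2 + Tfun p μ f g lp lf lg L ^ 2
    + Nfun p μ f g h k lf lg lh lk lL L ^ 2) - m ^ 2 * (1 - lm) ^ 2

noncomputable def Sfun (p μ f g h k lp lf lg lh lk lL lm m c L : ℝ) : ℝ :=
  1 - lm - (c / m) * Real.sqrt (Rfun p μ lf lg L ^ 2 + Tfun p μ f g lp lf lg L ^ 2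
    + Nfun p μ f g h k lf lg lh lk lL L ^ 2)

noncomputable def cA0 (p μ f g h k lp lf lg lh lk lL lm m c : ℝ) : ℝ := ((-1 : ℝ) * m ^ 2 + (2 : ℝ) * lm * m ^ 2 + (-1 : ℝ) * lm ^ 2 * m ^ 2 + (-1/2 : ℝ) * g ^ 2 * m ^ 2 + g ^ 2 * lm * m ^ 2 + (-1/2 : ℝ) * g ^ 2 * lm ^ 2 * m ^ 2 + (-1/2 : ℝ) * f ^ 2 * m ^ 2 + f ^ 2 * lm * m ^ 2 + (-1/2 : ℝ) * f ^ 2 * lm ^ 2 * m ^ 2 + (1/8 : ℝ) * (p / μ) * lk ^ 2 * c ^ 2 + (1/8 : ℝ) * (p / μ) * lh ^ 2 * c ^ 2 + (5/2 : ℝ) * (p / μ) * lg ^ 2 * c ^ 2 + (5/2 : ℝ) * (p / μ) * lf ^ 2 * c ^ 2 + (-1/2 : ℝ) * (p / μ) * k * lh * lL * c ^ 2 + (1/2 : ℝ) * (p / μ) * k ^ 2 * lL ^ 2 * c ^ 2 + (1/4 : ℝ) * (p / μ) * k ^ 2 * lk ^ 2 * c ^ 2 + (1/4 : ℝ) * (p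 / μ) * k ^ 2 * lh ^ 2 * c ^ 2 + (-1/2 : ℝ) * (p / μ) * k ^ 3 * lh * lL * c ^ 2 + (1/8 : ℝ) * (p / μ) * k ^ 4 * lk ^ 2 * c ^ 2 + (1/8 : ℝ) * (p / μ) * k ^ 4 * lh ^ 2 * c ^ 2 + (1/2 : ℝ) * (p / μ) * h * lk * lL * c ^ 2 + (1/2 : ℝ) * (p / μ) * h * k ^ 2 * lk * lL * c ^ 2 + (1/2 : ℝ) * (p / μ) * h ^ 2 * lL ^ 2 * c ^ 2 + (1/4 : ℝ) * (p / μ) * h ^ 2 * lk ^ 2 * c ^ 2 + (1/4 : ℝ) * (p / μ) * h ^ 2 * lh ^ 2 * c ^ 2 + (-1/2 : ℝ) * (p / μ) * h ^ 2 * k * lh * lL * c ^ 2 + (1/4 : ℝ) * (p / μ) * h ^ 2 * k ^ 2 * lk ^ 2 * c ^ 2 + (1/4 : ℝ) * (p / μ) * h ^ 2 * k ^ 2 * lh ^ 2 * c ^ 2 + (1/2 : ℝ) * (p / μ) * h ^ 3 * lk * lL * c ^ 2 + (1/8 : ℝ) * (p / μ) * h ^ 4 * lk ^ 2 * c ^ 2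 + (1/8 : ℝ) * (p / μ) * h ^ 4 * lh ^ 2 * c ^ 2 + (1/2 : ℝ) * (p / μ) * g * k * lf * lh * c ^ 2 + (-1 : ℝ) * (p / μ) * g * k ^ 2 * lf * lL * c ^ 2 + (1/2 : ℝ) * (p / μ) * g * k ^ 3 * lf * lh * c ^ 2 + (-1/2 : ℝ) * (p / μ) * g * h * lf * lk * c ^ 2 + (-1/2 : ℝ) * (p / μ) * g * h * k ^ 2 * lf * lk * c ^ 2 + (-1 : ℝ) * (p / μ) * g * h ^ 2 * lf * lL * c ^ 2 + (1/2 : ℝ) * (p / μ) * g * h ^ 2 * k * lf * lh * c ^ 2 + (-1/2 : ℝ) * (p / μ) * g * h ^ 3 * lf * lk * c ^ 2 + (5/2 : ℝ) * (p / μ) * g ^ 2 * lg ^ 2 * c ^ 2 + (1/2 : ℝ) * (p / μ) * g ^ 2 * lf ^ 2 * c ^ 2 + (1/2 : ℝ) * (p / μ) * g ^ 2 * k ^ 2 * lf ^ 2 * c ^ 2 + (1/2 : ℝ) * (p / μ) * g ^ 2 * h ^ 2 * lf ^ 2 * c ^ 2 + (-1/2 : ℝ) * (p / μ) * f * k * lg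 * lh * c ^ 2 + (p / μ) * f * k ^ 2 * lg * lL * c ^ 2 + (-1/2 : ℝ) * (p / μ) * f * k ^ 3 * lg * lh * c ^ 2 + (1/2 : ℝ) * (p / μ) * f * h * lg * lk * c ^ 2 + (1/2 : ℝ) * (p / μ) * f * h * k ^ 2 * lg * lk * c ^ 2 + (p / μ) * f * h ^ 2 * lg * lL * c ^ 2 + (-1/2 : ℝ) * (p / μ) * f * h ^ 2 * k * lg * lh * c ^ 2 + (1/2 : ℝ) * (p / μ) * f * h ^ 3 * lg * lk * c ^ 2 + (4 : ℝ) * (p / μ) * f * g * lf * lg * c ^ 2 + (-1 : ℝ) * (p / μ) * f * g * k ^ 2 * lf * lg * c ^ 2 + (-1 : ℝ) * (p / μ) * f * g * h ^ 2 * lf * lg * c ^ 2 + (1/2 : ℝ) * (p / μ) * f ^ 2 * lg ^ 2 * c ^ 2 + (5/2 : ℝ) * (p / μ) * f ^ 2 * lf ^ 2 * c ^ 2 + (1/2 : ℝ) * (p / μ) * f ^ 2 * k ^ 2 * lg ^ 2 * c ^ 2 + (1/2 : ℝ) * (p / μ) * f ^ 2 * h ^ 2 * lg ^ 2 * c ^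 2 + (6 : ℝ) * (p / μ) * p * g * lp * lg * c ^ 2 + (6 : ℝ) * (p / μ) * p * f * lp * lf * c ^ 2 + (4 : ℝ) * (p / μ) * p ^ 2 * lp ^ 2 * c ^ 2)

noncomputable def cA1 (p μ f g h k lp lf lg lh lk lL lm m c : ℝ) : ℝ := ((-2 : ℝ) * f * m ^ 2 + (4 : ℝ) * f * lm * m ^ 2 + (-2 : ℝ) * f * lm ^ 2 * m ^ 2 + (5 : ℝ) * (p / μ) * g * lf * lg * c ^ 2 + (5/2 : ℝ) * (p / μ) * f * lg ^ 2 * c ^ 2 + (15/2 : ℝ) * (p / μ) * f * lf ^ 2 * c ^ 2 + (8 : ℝ) * (p / μ) * p * lp * lf * c ^ 2)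

noncomputable def cA2 (p μ f g h k lp lf lg lh lk lL lm m c : ℝ) : ℝ := ((1/2 : ℝ) * g ^ 2 * m ^ 2 + (-1 : ℝ) * g ^ 2 * lm * m ^ 2 + (1/2 : ℝ) * g ^ 2 * lm ^ 2 * m ^ 2 + (-1/2 : ℝ) * f ^ 2 * m ^ 2 + f ^ 2 * lm * m ^ 2 + (-1/2 : ℝ) * f ^ 2 * lm ^ 2 * m ^ 2 + (-1/8 : ℝ) * (p / μ) * lk ^ 2 * c ^ 2 + (1/8 : ℝ) * (p / μ) * lh ^ 2 * c ^ 2 + (-3/2 : ℝ) * (p / μ) * lg ^ 2 * c ^ 2 + (3/2 : ℝ) * (p / μ) * lf ^ 2 * c ^ 2 + (-1/2 : ℝ) * (p / μ) * k * lh * lL * c ^ 2 + (1/2 : ℝ) * (p / μ) * k ^ 2 * lL ^ 2 * c ^ 2 + (-1/4 : ℝ) * (p / μ) * k ^ 2 * lk ^ 2 * c ^ 2 + (1/4 : ℝ) * (p / μ) * k ^ 2 * lh ^ 2 * c ^ 2 + (-1/2 : ℝ) * (p / μ) * k ^ 3 * lh * lL * c ^ 2 + (-1/8 : ℝ) * (p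 / μ) * k ^ 4 * lk ^ 2 * c ^ 2 + (1/8 : ℝ) * (p / μ) * k ^ 4 * lh ^ 2 * c ^ 2 + (-1/2 : ℝ) * (p / μ) * h * lk * lL * c ^ 2 + (-1/2 : ℝ) * (p / μ) * h * k ^ 2 * lk * lL * c ^ 2 + (-1/2 : ℝ) * (p / μ) * h ^ 2 * lL ^ 2 * c ^ 2 + (-1/4 : ℝ) * (p / μ) * h ^ 2 * lk ^ 2 * c ^ 2 + (1/4 : ℝ) * (p / μ) * h ^ 2 * lh ^ 2 * c ^ 2 + (-1/2 : ℝ) * (p / μ) * h ^ 2 * k * lh * lL * c ^ 2 + (-1/4 : ℝ) * (p / μ) * h ^ 2 * k ^ 2 * lk ^ 2 * c ^ 2 + (1/4 : ℝ) * (p / μ) * h ^ 2 * k ^ 2 * lh ^ 2 * c ^ 2 + (-1/2 : ℝ) * (p / μ) * h ^ 3 * lk * lL * c ^ 2 + (-1/8 : ℝ) * (p / μ) * h ^ 4 * lk ^ 2 * c ^ 2 + (1/8 : ℝ) * (p / μ) * h ^ 4 * lh ^ 2 * c ^ 2 + (1/2 : ℝ) * (p / μ) * g * k * lf * lh * c ^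 2 + (-1 : ℝ) * (p / μ) * g * k ^ 2 * lf * lL * c ^ 2 + (1/2 : ℝ) * (p / μ) * g * k ^ 3 * lf * lh * c ^ 2 + (1/2 : ℝ) * (p / μ) * g * h * lf * lk * c ^ 2 + (1/2 : ℝ) * (p / μ) * g * h * k ^ 2 * lf * lk * c ^ 2 + (p / μ) * g * h ^ 2 * lf * lL * c ^ 2 + (1/2 : ℝ) * (p / μ) * g * h ^ 2 * k * lf * lh * c ^ 2 + (1/2 : ℝ) * (p / μ) * g * h ^ 3 * lf * lk * c ^ 2 + (-3/2 : ℝ) * (p / μ) * g ^ 2 * lg ^ 2 * c ^ 2 + (-1/2 : ℝ) * (p / μ) * g ^ 2 * lf ^ 2 * c ^ 2 + (1/2 : ℝ) * (p / μ) * g ^ 2 * k ^ 2 * lf ^ 2 * c ^ 2 + (-1/2 : ℝ) * (p / μ) * g ^ 2 * h ^ 2 * lf ^ 2 * c ^ 2 + (-1/2 : ℝ) * (p / μ) * f * k * lg * lh * c ^ 2 + (p / μ) * f * k ^ 2 * lg * lL * c ^ 2 + (-1/2 : ℝ) * (p / μ) * f * k ^ 3 * lg * lh * c ^ 2 + (-1/2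 : ℝ) * (p / μ) * f * h * lg * lk * c ^ 2 + (-1/2 : ℝ) * (p / μ) * f * h * k ^ 2 * lg * lk * c ^ 2 + (-1 : ℝ) * (p / μ) * f * h ^ 2 * lg * lL * c ^ 2 + (-1/2 : ℝ) * (p / μ) * f * h ^ 2 * k * lg * lh * c ^ 2 + (-1/2 : ℝ) * (p / μ) * f * h ^ 3 * lg * lk * c ^ 2 + (-1 : ℝ) * (p / μ) * f * g * k ^ 2 * lf * lg * c ^ 2 + (p / μ) * f * g * h ^ 2 * lf * lg * c ^ 2 + (1/2 : ℝ) * (p / μ) * f ^ 2 * lg ^ 2 * c ^ 2 + (3/2 : ℝ) * (p / μ) * f ^ 2 * lf ^ 2 * c ^ 2 + (1/2 : ℝ) * (p / μ) * f ^ 2 * k ^ 2 * lg ^ 2 * c ^ 2 + (-1/2 : ℝ) * (p / μ) * f ^ 2 * h ^ 2 * lg ^ 2 * c ^ 2 + (-2 : ℝ) * (p / μ) * p * g * lp * lg * c ^ 2 + (2 : ℝ) * (p / μ) * p * f * lp * lf * c ^ 2)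

noncomputable def cA3 (p μ f g h k lp lf lg lh lk lL lm m c : ℝ) : ℝ := ((-1 : ℝ) * (p / μ) * g * lf * lg * c ^ 2 + (-1/2 : ℝ) * (p / μ) * f * lg ^ 2 * c ^ 2 + (1/2 : ℝ) * (p / μ) * f * lf ^ 2 * c ^ 2)

noncomputable def cB1 (p μ f g h k lp lf lg lh lk lL lm m c : ℝ) : ℝ := ((-2 : ℝ) * g * m ^ 2 + (4 : ℝ) * g * lm * m ^ 2 + (-2 : ℝ) * g * lm ^ 2 * m ^ 2 + (15/2 : ℝ) * (p / μ) * g * lg ^ 2 * c ^ 2 + (5/2 : ℝ) * (p / μ) * g * lf ^ 2 * c ^ 2 + (5 : ℝ) * (p / μ) * f * lf * lg * c ^ 2 + (8 : ℝ) * (p / μ) * p * lp * lg * c ^ 2)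

noncomputable def cB2 (p μ f g h k lp lf lg lh lk lL lm m c : ℝ) : ℝ := ((-1 : ℝ) * f * g * m ^ 2 + (2 : ℝ) * f * g * lm * m ^ 2 + (-1 : ℝ) * f * g * lm ^ 2 * m ^ 2 + (1/4 : ℝ) * (p / μ) * lh * lk * c ^ 2 + (3 : ℝ) * (p / μ) * lf * lg * c ^ 2 + (-1/2 : ℝ) * (p / μ) * k * lk * lL * c ^ 2 + (1/2 : ℝ) * (p / μ) * k ^ 2 * lh * lk * c ^ 2 + (-1/2 : ℝ) * (p / μ) * k ^ 3 * lk * lL * c ^ 2 + (1/4 : ℝ) * (p / μ) * k ^ 4 * lh * lk * c ^ 2 + (1/2 : ℝ) * (p / μ) * h * lh * lL * c ^ 2 + (-1 : ℝ) * (p / μ) * h * k * lL ^ 2 * c ^ 2 + (1/2 : ℝ) * (p / μ) * h * k ^ 2 * lh * lL * c ^ 2 + (1/2 : ℝ) * (p / μ) * h ^ 2 * lh * lk * c ^ 2 + (-1/2 : ℝ) * (p / μ) * h ^ 2 * k * lk * lL * c ^ 2 + (1/2 : ℝ) * (p / μ) * h ^ 2 * k ^ 2 * lh * lk * c ^ 2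 + (1/2 : ℝ) * (p / μ) * h ^ 3 * lh * lL * c ^ 2 + (1/4 : ℝ) * (p / μ) * h ^ 4 * lh * lk * c ^ 2 + (1/2 : ℝ) * (p / μ) * g * k * lf * lk * c ^ 2 + (1/2 : ℝ) * (p / μ) * g * k ^ 3 * lf * lk * c ^ 2 + (-1/2 : ℝ) * (p / μ) * g * h * lf * lh * c ^ 2 + (2 : ℝ) * (p / μ) * g * h * k * lf * lL * c ^ 2 + (-1/2 : ℝ) * (p / μ) * g * h * k ^ 2 * lf * lh * c ^ 2 + (1/2 : ℝ) * (p / μ) * g * h ^ 2 * k * lf * lk * c ^ 2 + (-1/2 : ℝ) * (p / μ) * g * h ^ 3 * lf * lh * c ^ 2 + (p / μ) * g ^ 2 * lf * lg * c ^ 2 + (-1 : ℝ) * (p / μ) * g ^ 2 * h * k * lf ^ 2 * c ^ 2 + (-1/2 : ℝ) * (p / μ) * f * k * lg * lk * c ^ 2 + (-1/2 : ℝ) * (p / μ) * f * k ^ 3 * lg * lk * c ^ 2 + (1/2 : ℝ) * (p / μ) * f * h * lg * lh * c ^ 2 + (-2 : ℝ) * (p / μ) * f * h * k * lg * lL * c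 ^ 2 + (1/2 : ℝ) * (p / μ) * f * h * k ^ 2 * lg * lh * c ^ 2 + (-1/2 : ℝ) * (p / μ) * f * h ^ 2 * k * lg * lk * c ^ 2 + (1/2 : ℝ) * (p / μ) * f * h ^ 3 * lg * lh * c ^ 2 + (2 : ℝ) * (p / μ) * f * g * lg ^ 2 * c ^ 2 + (2 : ℝ) * (p / μ) * f * g * lf ^ 2 * c ^ 2 + (2 : ℝ) * (p / μ) * f * g * h * k * lf * lg * c ^ 2 + (p / μ) * f ^ 2 * lf * lg * c ^ 2 + (-1 : ℝ) * (p / μ) * f ^ 2 * h * k * lg ^ 2 * c ^ 2 + (2 : ℝ) * (p / μ) * p * g * lp * lf * c ^ 2 + (2 : ℝ) * (p / μ) * p * f * lp * lg * c ^ 2)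

noncomputable def cB3 (p μ f g h k lp lf lg lh lk lL lm m c : ℝ) : ℝ := ((-1/2 : ℝ) * (p / μ) * g * lg ^ 2 * c ^ 2 + (1/2 : ℝ) * (p / μ) * g * lf ^ 2 * c ^ 2 + (p / μ) * f * lf * lg * c ^ 2)

noncomputable def cQQ (p μ f g h k lp lf lg lh lk lL lm m c x y : ℝ) : ℝ := ((-1/2 : ℝ) * g ^ 2 * m ^ 2 + g ^ 2 * lm * m ^ 2 + (-1/2 : ℝ) * g ^ 2 * lm ^ 2 * m ^ 2 + (-1/2 : ℝ) * f ^ 2 * m ^ 2 + f ^ 2 * lm * m ^ 2 + (-1/2 : ℝ) * f ^ 2 * lm ^ 2 * m ^ 2 + (1/8 : ℝ) * (p / μ) * lk ^ 2 * c ^ 2 + (1/8 : ℝ) * (p / μ) * lh ^ 2 * c ^ 2 + (5/2 : ℝ) * (p / μ) * lg ^ 2 * c ^ 2 + (5/2 : ℝ) * (p / μ) * lf ^ 2 * c ^ 2 + (-1/2 : ℝ) * (p / μ) * k * lh * lL * c ^ 2 + (1/2 : ℝ) * (p / μ) * k ^ 2 * lL ^ 2 * c ^ 2 + (1/4 : ℝ)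 * (p / μ) * k ^ 2 * lk ^ 2 * c ^ 2 + (1/4 : ℝ) * (p / μ) * k ^ 2 * lh ^ 2 * c ^ 2 + (-1/2 : ℝ) * (p / μ) * k ^ 3 * lh * lL * c ^ 2 + (1/8 : ℝ) * (p / μ) * k ^ 4 * lk ^ 2 * c ^ 2 + (1/8 : ℝ) * (p / μ) * k ^ 4 * lh ^ 2 * c ^ 2 + (1/2 : ℝ) * (p / μ) * h * lk * lL * c ^ 2 + (1/2 : ℝ) * (p / μ) * h * k ^ 2 * lk * lL * c ^ 2 + (1/2 : ℝ) * (p / μ) * h ^ 2 * lL ^ 2 * c ^ 2 + (1/4 : ℝ) * (p / μ) * h ^ 2 * lk ^ 2 * c ^ 2 + (1/4 : ℝ) * (p / μ) * h ^ 2 * lh ^ 2 * c ^ 2 + (-1/2 : ℝ) * (p / μ) * h ^ 2 * k * lh * lL * c ^ 2 + (1/4 : ℝ) * (p / μ) * h ^ 2 * k ^ 2 * lk ^ 2 * c ^ 2 + (1/4 : ℝ) * (p / μ) * h ^ 2 * k ^ 2 * lh ^ 2 * c ^ 2 + (1/2 : ℝ) * (p / μ) * h ^ 3 * lk * lL * c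 ^ 2 + (1/8 : ℝ) * (p / μ) * h ^ 4 * lk ^ 2 * c ^ 2 + (1/8 : ℝ) * (p / μ) * h ^ 4 * lh ^ 2 * c ^ 2 + (7/2 : ℝ) * (p / μ) * g * lg ^ 2 * c ^ 2 * y + (p / μ) * g * lf * lg * c ^ 2 * x + (5/2 : ℝ) * (p / μ) * g * lf ^ 2 * c ^ 2 * y + (1/2 : ℝ) * (p / μ) * g * k * lf * lh * c ^ 2 + (-1 : ℝ) * (p / μ) * g * k ^ 2 * lf * lL * c ^ 2 + (1/2 : ℝ) * (p / μ) * g * k ^ 3 * lf * lh * c ^ 2 + (-1/2 : ℝ) * (p / μ) * g * h * lf * lk * c ^ 2 + (-1/2 : ℝ) * (p / μ) * g * h * k ^ 2 * lf * lk * c ^ 2 + (-1 : ℝ) * (p / μ) * g * h ^ 2 * lf * lL * c ^ 2 + (1/2 : ℝ) * (p / μ) * g * h ^ 2 * k * lf * lh * c ^ 2 + (-1/2 : ℝ) * (p / μ) * g * h ^ 3 * lf * lk * c ^ 2 + (3/2 : ℝ) * (p / μ) * g ^ 2 * lg ^ 2 * c ^ 2 + (p / μ) * g ^ 2 * lg ^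 2 * c ^ 2 * y ^ 2 + (1/2 : ℝ) * (p / μ) * g ^ 2 * lf ^ 2 * c ^ 2 + (p / μ) * g ^ 2 * lf ^ 2 * c ^ 2 * y ^ 2 + (1/2 : ℝ) * (p / μ) * g ^ 2 * k ^ 2 * lf ^ 2 * c ^ 2 + (1/2 : ℝ) * (p / μ) * g ^ 2 * h ^ 2 * lf ^ 2 * c ^ 2 + (5/2 : ℝ) * (p / μ) * f * lg ^ 2 * c ^ 2 * x + (p / μ) * f * lf * lg * c ^ 2 * y + (7/2 : ℝ) * (p / μ) * f * lf ^ 2 * c ^ 2 * x + (-1/2 : ℝ) * (p / μ) * f * k * lg * lh * c ^ 2 + (p / μ) * f * k ^ 2 * lg * lL * c ^ 2 + (-1/2 : ℝ) * (p / μ) * f * k ^ 3 * lg * lh * c ^ 2 + (1/2 : ℝ) * (p / μ) * f * h * lg * lk * c ^ 2 + (1/2 : ℝ) * (p / μ) * f * h * k ^ 2 * lg * lk * c ^ 2 + (p / μ) * f * h ^ 2 * lg * lL * c ^ 2 + (-1/2 : ℝ) * (p / μ) * f * h ^ 2 * k * lg * lh * c ^ 2 + (1/2 : ℝ) * (p /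 μ) * f * h ^ 3 * lg * lk * c ^ 2 + (2 : ℝ) * (p / μ) * f * g * lg ^ 2 * c ^ 2 * x * y + (2 : ℝ) * (p / μ) * f * g * lf * lg * c ^ 2 + (2 : ℝ) * (p / μ) * f * g * lf ^ 2 * c ^ 2 * x * y + (-1 : ℝ) * (p / μ) * f * g * k ^ 2 * lf * lg * c ^ 2 + (-1 : ℝ) * (p / μ) * f * g * h ^ 2 * lf * lg * c ^ 2 + (1/2 : ℝ) * (p / μ) * f ^ 2 * lg ^ 2 * c ^ 2 + (p / μ) * f ^ 2 * lg ^ 2 * c ^ 2 * x ^ 2 + (3/2 : ℝ) * (p / μ) * f ^ 2 * lf ^ 2 * c ^ 2 + (p / μ) * f ^ 2 * lf ^ 2 * c ^ 2 * x ^ 2 + (1/2 : ℝ) * (p / μ) * f ^ 2 * k ^ 2 * lg ^ 2 * c ^ 2 + (1/2 : ℝ) * (p / μ) * f ^ 2 * h ^ 2 * lg ^ 2 * c ^ 2 + (2 : ℝ) * (p / μ) * p * g * lp * lg * c ^ 2 + (2 : ℝ) * (p / μ) * p * f * lp * lf * c ^ 2)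

/-- For positive `p, μ, m, c` and `f² + g² < 1`, the function
`L ↦ G(L) · w(L)²` is a trigonometric polynomial of degree at most 4 in `L`. -/
theorem switching_times_w_sq_is_trig_poly_deg_four
    (p μ f g h k lp lf lg lh lk lL lm m c : ℝ)
    (hp : 0 < p) (hμ : 0 < μ) (hfg : f ^ 2 + g ^ 2 < 1) (hm : 0 < m) (hc : 0 < c) :
    ∃ a b : ℕ → ℝ, ∀ L : ℝ,
      Gfun p μ f g h k lp lf lg lh lk lL lm m c L * (wfun f g L) ^ 2
        = a 0 + ∑ j ∈ Finset.Icc 1 4,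
            (a j * Real.cos ((j : ℝ) * L) + b j * Real.sin ((j : ℝ) * L)) := by
  refine ⟨(fun j => if j = 0 then cA0 p μ f g h k lp lf lg lh lk lL lm m c else if j = 1 then cA1 p μ f g h k lp lf lg lh lk lL lm m c
      else if j = 2 then cA2 p μ f g h k lp lf lg lh lk lL lm m c else if j = 3 then cA3 p μ f g h k lp lf lg lh lk lL lm m c else 0),
    (fun j => if j = 1 then cB1 p μ f g h k lp lf lg lh lk lL lm m c else if j = 2 then cB2 p μ f g h k lp lf lg lh lk lL lm m c
      else if j = 3 then cB3 p μ f g h k lp lf lg lh lk lL lm m c else 0), ?_⟩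
  intro L
  have hxy : Real.sin L ^ 2 + Real.cos L ^ 2 = 1 := Real.sin_sq_add_cos_sq L
  have hw : (0:ℝ) < 1 + f * Real.cos L + g * Real.sin L := by
    nlinarith [sq_nonneg (f * Real.sin L - g * Real.cos L), hxy,
      sq_nonneg (1 + f * Real.cos L + g * Real.sin L),
      sq_nonneg (f * Real.cos L + g * Real.sin L)]
  have hinv : (1 / (1 + f * Real.cos L + g * Real.sin L)) ^ 2
      * (1 + f * Real.cos L + g * Real.sin L) ^ 2 = 1 := by
    field_simp
  have hq : Real.sqrt (p / μ) ^ 2 = p / μ := Real.sq_sqrt (by positivity)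
  have h2c : Real.cos (2 * L) = Real.cos L ^ 2 - Real.sin L ^ 2 := by
    rw [two_mul, Real.cos_add]; ring
  have h2s : Real.sin (2 * L) = 2 * Real.sin L * Real.cos L := by
    rw [two_mul, Real.sin_add]; ring
  have h3c : Real.cos (3 * L) = Real.cos L ^ 3 - 3 * Real.cos L * Real.sin L ^ 2 := by
    rw [show (3:ℝ) * L = 2 * L + L by ring, Real.cos_add, h2c, h2s]; ring
  have h3s : Real.sin (3 * L) = 3 * Real.cos L ^ 2 * Real.sin L - Real.sin L ^ 3 := by
    rw [show (3:ℝ) * L = 2 * L + L by ring, Real.sin_add, h2c, h2s]; ring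
  rw [show Finset.Icc (1:ℕ) 4 = {1, 2, 3, 4} by rfl]
  norm_num [Finset.sum_insert, Finset.mem_insert, Finset.mem_singleton, Finset.sum_singleton]
  simp only [Gfun, Rfun, Tfun, Nfun, wfun]
  linear_combination (norm := (simp only [cA0, cA1, cA2, cA3, cB1, cB2, cB3, cQQ]; ring1))
    (c ^ 2 * (((lf * Real.sin L - lg * Real.cos L) * (1 + f * Real.cos L + g * Real.sin L)) ^ 2
        + (2 * p * lp + lf * ((1 + f * Real.cos L + g * Real.sin L + 1) * Real.cos L + f)
            + lg * ((1 + f * Real.cos L + g * Real.sin L + 1) * Real.sin L + g)) ^ 2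
        + ((lL + f * lg - g * lf) * (h * Real.sin L - k * Real.cos L)
            + ((1 + h ^ 2 + k ^ 2) / 2) * (lh * Real.cos L + lk * Real.sin L)) ^ 2)) * hq
    + (c ^ 2 * Real.sqrt (p / μ) ^ 2
        * ((2 * p * lp + lf * ((1 + f * Real.cos L + g * Real.sin L + 1) * Real.cos L + f)
            + lg * ((1 + f * Real.cos L + g * Real.sin L + 1) * Real.sin L + g)) ^ 2
        + ((lL + f * lg - g * lf) * (h * Real.sin L - k * Real.cos L)
            + ((1 + h ^ 2 + k ^ 2) / 2) * (lh * Real.cos L + lk * Real.sin L)) ^ 2)) * hinv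
    + (cQQ p μ f g h k lp lf lg lh lk lL lm m c (Real.cos L) (Real.sin L)) * hxy
    - (cA2 p μ f g h k lp lf lg lh lk lL lm m c) * h2c - (cB2 p μ f g h k lp lf lg lh lk lL lm m c) * h2s
    - (cA3 p μ f g h k lp lf lg lh lk lL lm m c) * h3c - (cB3 p μ f g h k lp lf lg lh lk lL lm m c) * h3s
end

section
/- Let p > 0, μ > 0, f, g, h, k be reals with f² + g² < 1, and let λ_p, λ_f, λ_g, λ_h, λ_k, λ_L, λ_m, m > 0, c > 0 be reals. Then there exists a real polynomial P of degree at most 6 (the switching polynomial) such that: (i) for every L ∈ (−π, π), G(L) = 0 if and only if P(tan(L/2)) = 0; (ii) P is the zero polynomial only if G vanishes identically on (−π, π); and (iii) if moreover λ_m ≤ 1, then for every L ∈ (−π, π), S(L) = 0 if and only if P(tan(L/2)) = 0. -/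
/-!
With `σ = √(p/μ)` we have `R = σ (λ_f sin L - λ_g cos L)`, `T = σ (u + e / w)` and
`N = σ n / w`, where `u = λ_f cos L + λ_g sin L`, `e = 2 p λ_p + f λ_f + g λ_g + u` and `n` is
the bracket in `N`. Since `(λ_f sin L - λ_g cos L)² + u² = λ_f² + λ_g²`, this gives
`w² (R² + T² + N²) = σ² ((λ_f² + λ_g²) w² + 2 u e w + e² + n²)`.
Hence `w² G` is a sum of products of three functions of the form `a + b cos L + d sin L`.
Under `t = tan (L/2)` each of these is a quadratic in `t` divided by `1 + t²`, so
`(1 + t²)³ w² G` is a polynomial of degree at most 6 in `t`; as `w > 0`, it vanishes exactly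
where `G` does. When `λ_m ≤ 1`, `S = 0` and `G = 0` both say `c √(R² + T² + N²) = m (1 - λ_m)`,
the first directly and the second after squaring two nonnegative numbers.
-/

open Polynomial Real

lemma cos_ne_neg_one_of_mem_Ioo {x : ℝ} (hx : x ∈ Set.Ioo (-π) π) : cos x ≠ -1 := by
  have hpos : 0 < cos (x / 2) := cos_pos_of_mem_Ioo ⟨by linarith [hx.1], by linarith [hx.2]⟩
  have hsq := cos_sq (x / 2)
  rw [mul_div_cancel₀ x two_ne_zero] at hsq
  nlinarith

noncomputable def halfAnglePoly (a b d : ℝ) : ℝ[X] :=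
  C a * (1 + X ^ 2) + C b * (1 - X ^ 2) + C (2 * d) * X

lemma natDegree_halfAnglePoly_le (a b d : ℝ) : (halfAnglePoly a b d).natDegree ≤ 2 := by
  unfold halfAnglePoly
  compute_degree

lemma eval_halfAnglePoly (a b d : ℝ) {x : ℝ} (hx : cos x ≠ -1) :
    (halfAnglePoly a b d).eval (tan (x / 2))
      = (1 + tan (x / 2) ^ 2) * (a + b * cos x + d * sin x) := by
  rw [cos_eq_two_mul_tan_half_div_one_sub_tan_half_sq x hx,
    sin_eq_two_mul_tan_half_div_one_add_tan_half_sq x]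
  simp only [halfAnglePoly, eval_add, eval_sub, eval_mul, eval_C, eval_X, eval_pow, eval_one]
  field_simp

lemma sub_div_mul_sqrt_eq_zero_iff {a c m x : ℝ} (ha : 0 ≤ a) (hc : 0 ≤ c) (hm : 0 < m)
    (hx : 0 ≤ x) : a - c / m * √x = 0 ↔ c ^ 2 * x - m ^ 2 * a ^ 2 = 0 := by
  calc a - c / m * √x = 0 ↔ c * √x = m * a := by
        rw [sub_eq_zero, div_mul_eq_mul_div, eq_div_iff hm.ne', eq_comm, mul_comm a]
    _ ↔ (c * √x) ^ 2 = (m * a) ^ 2 := (sq_eq_sq₀ (by positivity) (by positivity)).symm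
    _ ↔ c ^ 2 * x - m ^ 2 * a ^ 2 = 0 := by rw [mul_pow, mul_pow, sq_sqrt hx, sub_eq_zero]

lemma wfun_pos {f g : ℝ} (hfg : f ^ 2 + g ^ 2 < 1) (L : ℝ) : 0 < wfun f g L := by
  unfold wfun
  nlinarith [sin_sq_add_cos_sq L, sq_nonneg (f * sin L - g * cos L),
    sq_nonneg (1 + f * cos L + g * sin L)]

lemma primer_sq_mul_wfun_sq (p μ f g h k lp lf lg lh lk lL L : ℝ) (hw : wfun f g L ≠ 0) :
    (Rfun p μ lf lg L ^ 2 + Tfun p μ f g lp lf lg L ^ 2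
      + Nfun p μ f g h k lf lg lh lk lL L ^ 2) * wfun f g L ^ 2 = √(p / μ) ^ 2 *
      ((lf ^ 2 + lg ^ 2) * wfun f g L ^ 2
        + 2 * (lf * cos L + lg * sin L) * (2 * p * lp + f * lf + g * lg + lf * cos L + lg * sin L)
          * wfun f g L
        + (2 * p * lp + f * lf + g * lg + lf * cos L + lg * sin L) ^ 2
        + ((lL + f * lg - g * lf) * (h * sin L - k * cos L)
            + ((1 + h ^ 2 + k ^ 2) / 2) * (lh * cos L + lk * sin L)) ^ 2) := by
  simp only [Rfun, Tfun, Nfun]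
  field_simp
  linear_combination (4 * √(p / μ) ^ 2 * (lf ^ 2 + lg ^ 2) * wfun f g L ^ 2) * sin_sq_add_cos_sq L

/-- `(1 + t²)³ w² G` written through the identity for `w² (R² + T² + N²)` above, with
`W, U, E, N, O` the numerators of `w, u, e, n, 1`. -/
noncomputable def switchingPoly (p μ f g h k lp lf lg lh lk lL lm m c : ℝ) : ℝ[X] :=
  let W := halfAnglePoly 1 f g
  let U := halfAnglePoly 0 lf lg
  let E := halfAnglePoly (2 * p * lp + f * lf + g * lg) lf lg
  let N := halfAnglePoly 0 ((1 + h ^ 2 + k ^ 2) / 2 * lh - (lL + f * lg - g * lf) * k)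
    ((lL + f * lg - g * lf) * h + (1 + h ^ 2 + k ^ 2) / 2 * lk)
  let O := halfAnglePoly 1 0 0
  C (c ^ 2 * √(p / μ) ^ 2) *
      (C (lf ^ 2 + lg ^ 2) * (W * W * O) + C 2 * (U * E * W) + E * E * O + N * N * O)
    - C (m ^ 2 * (1 - lm) ^ 2) * (W * W * O)

section SwitchingPolynomial

variable {p μ f g h k lp lf lg lh lk lL lm m c L : ℝ}

lemma natDegree_switchingPoly_le :
    (switchingPoly p μ f g h k lp lf lg lh lk lL lm m c).natDegree ≤ 6 := by
  have cubic (a b d a' b' d' a'' b'' d'' : ℝ) :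
      (halfAnglePoly a b d * halfAnglePoly a' b' d' * halfAnglePoly a'' b'' d'').natDegree ≤ 6 :=
    natDegree_mul_le_of_le (natDegree_mul_le_of_le (natDegree_halfAnglePoly_le ..)
      (natDegree_halfAnglePoly_le ..)) (natDegree_halfAnglePoly_le ..)
  refine (natDegree_sub_le _ _).trans (max_le ((natDegree_C_mul_le _ _).trans ?_)
    ((natDegree_C_mul_le _ _).trans (cubic ..)))
  refine natDegree_add_le_of_degree_le (natDegree_add_le_of_degree_le
    (natDegree_add_le_of_degree_le ?_ ?_) (cubic ..)) (cubic ..) <;>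
  exact (natDegree_C_mul_le _ _).trans (cubic ..)

lemma eval_switchingPoly (hL : cos L ≠ -1) (hw : wfun f g L ≠ 0) :
    (switchingPoly p μ f g h k lp lf lg lh lk lL lm m c).eval (tan (L / 2))
      = (1 + tan (L / 2) ^ 2) ^ 3 * wfun f g L ^ 2
        * Gfun p μ f g h k lp lf lg lh lk lL lm m c L := by
  simp only [switchingPoly]
  simp only [eval_sub, eval_add, eval_mul, eval_C, eval_halfAnglePoly _ _ _ hL]
  have primer := primer_sq_mul_wfun_sq p μ f g h k lp lf lg lh lk lL L hw
  simp only [Gfun, wfun] at primer ⊢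
  linear_combination (-(1 + tan (L / 2) ^ 2) ^ 3 * c ^ 2) * primer

lemma Sfun_eq_zero_iff_Gfun_eq_zero (hm : 0 < m) (hc : 0 ≤ c) (hlm : lm ≤ 1) :
    Sfun p μ f g h k lp lf lg lh lk lL lm m c L = 0
      ↔ Gfun p μ f g h k lp lf lg lh lk lL lm m c L = 0 :=
  sub_div_mul_sqrt_eq_zero_iff (sub_nonneg.2 hlm) hc hm (by positivity)

end SwitchingPolynomial

theorem exists_switching_polynomial_general
    (p μ f g h k lp lf lg lh lk lL lm m c : ℝ)
    (hfg : f ^ 2 + g ^ 2 < 1) (hm : 0 < m) (hc : 0 < c) :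
    ∃ P : Polynomial ℝ, P.natDegree ≤ 6 ∧
      (∀ L ∈ Set.Ioo (-Real.pi) Real.pi,
        Gfun p μ f g h k lp lf lg lh lk lL lm m c L = 0 ↔
          P.eval (Real.tan (L / 2)) = 0) ∧
      (P = 0 → ∀ L ∈ Set.Ioo (-Real.pi) Real.pi,
        Gfun p μ f g h k lp lf lg lh lk lL lm m c L = 0) ∧
      (lm ≤ 1 → ∀ L ∈ Set.Ioo (-Real.pi) Real.pi,
        Sfun p μ f g h k lp lf lg lh lk lL lm m c L = 0 ↔
          P.eval (Real.tan (L / 2)) = 0) := by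
  set P := switchingPoly p μ f g h k lp lf lg lh lk lL lm m c
  have hG (L : ℝ) (hL : L ∈ Set.Ioo (-π) π) :
      Gfun p μ f g h k lp lf lg lh lk lL lm m c L = 0 ↔ P.eval (tan (L / 2)) = 0 := by
    have hw : wfun f g L ≠ 0 := (wfun_pos hfg L).ne'
    rw [eval_switchingPoly (cos_ne_neg_one_of_mem_Ioo hL) hw,
      mul_eq_zero_iff_left (mul_ne_zero (by positivity) (pow_ne_zero 2 hw))]
  refine ⟨P, natDegree_switchingPoly_le, hG, fun hP L hL => (hG L hL).2 (by simp [hP]), ?_⟩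
  intro hlm L hL
  rw [Sfun_eq_zero_iff_Gfun_eq_zero hm hc.le hlm, hG L hL]

/-- There exists a real polynomial `P` of degree at most 6 (the
switching polynomial) such that on `(-π, π)`: (i) `G(L) = 0 ↔ P(tan(L/2)) = 0`;
(ii) `P = 0` only if `G` vanishes identically on `(-π, π)`; and (iii) if
`λ_m ≤ 1`, then `S(L) = 0 ↔ P(tan(L/2)) = 0`. -/
theorem exists_switching_polynomial
    (p μ f g h k lp lf lg lh lk lL lm m c : ℝ)
    (hp : 0 < p) (hμ : 0 < μ) (hfg : f ^ 2 + g ^ 2 < 1) (hm : 0 < m) (hc : 0 < c) :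
    ∃ P : Polynomial ℝ, P.natDegree ≤ 6 ∧
      (∀ L ∈ Set.Ioo (-Real.pi) Real.pi,
        Gfun p μ f g h k lp lf lg lh lk lL lm m c L = 0 ↔
          P.eval (Real.tan (L / 2)) = 0) ∧
      (P = 0 → ∀ L ∈ Set.Ioo (-Real.pi) Real.pi,
        Gfun p μ f g h k lp lf lg lh lk lL lm m c L = 0) ∧
      (lm ≤ 1 → ∀ L ∈ Set.Ioo (-Real.pi) Real.pi,
        Sfun p μ f g h k lp lf lg lh lk lL lm m c L = 0 ↔
          P.eval (Real.tan (L / 2)) = 0) :=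
  exists_switching_polynomial_general p μ f g h k lp lf lg lh lk lL lm m c hfg hm hc
end

section
/- Let n ≥ 1 and let f be a continuous real-valued function on the circle ℝ/2πℤ whose zero set is finite with at most 2n elements. Then the closure of the set {x : f(x) < 0} in ℝ/2πℤ has at most n connected components. -/
/-!
If `C = closure {f < 0}` is the whole circle it is connected. Otherwise cut the circle at a point
outside `C`: then `C` is the continuous image of `closure U` for a bounded open `U ⊆ ℝ` whose
boundary points map injectively into the zeros of `f`. Every component of `closure U` is a compact
interval `[a, b]` with `a < b` and both endpoints on the boundary of `U`, and different components
have different endpoints, so twice the number of components is at most the number of zeros.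
-/

open Set Topology Bornology Function

theorem IsClosed.connectedComponentIn {X : Type*} [TopologicalSpace X] {F : Set X}
    (hF : IsClosed F) (x : X) : IsClosed (connectedComponentIn F x) := by
  by_cases hx : x ∈ F
  · refine closure_subset_iff_isClosed.mp <| isPreconnected_connectedComponentIn.closure
      |>.subset_connectedComponentIn (subset_closure (mem_connectedComponentIn hx)) ?_
    exact closure_minimal (connectedComponentIn_subset F x) hF
  · rw [connectedComponentIn_eq_empty hx]
    exact isClosed_empty

section Order

variable {α : Type*} [ConditionallyCompleteLinearOrder α] [TopologicalSpace α] [OrderTopology α]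
  [DenselyOrdered α]

theorem csInf_lt_of_mem_nhds [NoMinOrder α] {s : Set α} (hs : BddBelow s) {y : α}
    (h : s ∈ 𝓝 y) : sInf s < y := by
  obtain ⟨l, hly, hl⟩ := exists_Ioc_subset_of_mem_nhds h (exists_lt y)
  calc sInf s ≤ sInf (Ioc l y) := csInf_le_csInf hs (nonempty_Ioc.mpr hly) hl
    _ = l := csInf_Ioc hly
    _ < y := hly

theorem lt_csSup_of_mem_nhds [NoMaxOrder α] {s : Set α} (hs : BddAbove s) {y : α}
    (h : s ∈ 𝓝 y) : y < sSup s := by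
  obtain ⟨u, hyu, hu⟩ := exists_Ico_subset_of_mem_nhds h (exists_gt y)
  calc y < u := hyu
    _ = sSup (Ico y u) := (csSup_Ico hyu).symm
    _ ≤ sSup s := csSup_le_csSup hs (nonempty_Ico.mpr hyu) hu

end Order

namespace Real

/-- Near an isolated boundary point `x` of an open `U ⊆ ℝ`, one of the two sides of `x` lies in
`U`, and the closure of that side joins `x` to `U` inside `closure U`. -/
theorem connectedComponentIn_closure_inter_nonempty {U : Set ℝ} (hU : IsOpen U)
    (hfr : (frontier U).Finite) {x : ℝ} (hx : x ∈ closure U) :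
    (connectedComponentIn (closure U) x ∩ U).Nonempty := by
  have side : ∀ J : Set ℝ, IsPreconnected J → (J ∩ U).Nonempty → Disjoint J (frontier U) →
      x ∈ closure J → (connectedComponentIn (closure U) x ∩ U).Nonempty := by
    intro J hJ hJU hJfr hxJ
    have hJsub : J ⊆ U := hJ.subset_of_closure_inter_subset hU hJU fun z ⟨hzU, hzJ⟩ ↦
      by_contra fun hz ↦ hJfr.ne_of_mem hzJ (hU.frontier_eq ▸ ⟨hzU, hz⟩) rfl
    obtain ⟨y, hyJ, hyU⟩ := hJU
    refine ⟨y, hJ.closure.subset_connectedComponentIn hxJ (closure_mono hJsub)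
      (subset_closure hyJ), hyU⟩
  by_cases hxU : x ∈ U
  · exact ⟨x, mem_connectedComponentIn (subset_closure hxU), hxU⟩
  obtain ⟨ε, hε, hball⟩ := Metric.isOpen_iff.mp
    (hfr.subset (sdiff_subset (t := {x}))).isClosed.isOpen_compl x (by simp)
  obtain ⟨y, hyU, hxy⟩ := Metric.mem_closure_iff.mp hx ε hε
  have hfr_near : ∀ z, |x - z| < ε → z ≠ x → z ∉ frontier U := fun z hz hzx hzfr ↦
    hball (by rwa [Metric.mem_ball, dist_comm, Real.dist_eq]) ⟨hzfr, hzx⟩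
  rw [Real.dist_eq] at hxy
  rcases lt_or_gt_of_ne (ne_of_mem_of_not_mem hyU hxU) with hyx | hxy'
  · refine side (Ico y x) isPreconnected_Ico ⟨y, ⟨le_rfl, hyx⟩, hyU⟩ ?_ ?_
    · refine disjoint_left.mpr fun z hz ↦ hfr_near z ?_ hz.2.ne
      rw [abs_lt] at hxy ⊢; constructor <;> linarith [hz.1, hz.2]
    · rw [closure_Ico hyx.ne]; exact right_mem_Icc.mpr hyx.le
  · refine side (Ioc x y) isPreconnected_Ioc ⟨y, ⟨hxy', le_rfl⟩, hyU⟩ ?_ ?_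
    · refine disjoint_left.mpr fun z hz ↦ hfr_near z ?_ hz.1.ne'
      rw [abs_lt] at hxy ⊢; constructor <;> linarith [hz.1, hz.2]
    · rw [closure_Ioc hxy'.ne]; exact left_mem_Icc.mpr hxy'.le

/-- The extreme points of a component of `closure U` are boundary points of `U`, since a point
of the open set `U` is interior to its component. -/
theorem exists_frontier_lt_mem_connectedComponentIn_closure {U : Set ℝ} (hU : IsOpen U)
    (hb : IsBounded U) (hfr : (frontier U).Finite) {x : ℝ} (hx : x ∈ closure U) :
    ∃ a ∈ frontier U, ∃ b ∈ frontier U, a < b ∧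
      a ∈ connectedComponentIn (closure U) x ∧ b ∈ connectedComponentIn (closure U) x := by
  set T := connectedComponentIn (closure U) x
  have hT : IsCompact T := hb.isCompact_closure.of_isClosed_subset
    (isClosed_closure.connectedComponentIn x) (connectedComponentIn_subset _ _)
  have hT_nhds : ∀ y ∈ T ∩ U, T ∈ 𝓝 y := fun y ⟨hyT, hyU⟩ ↦ by
    rw [show T = _ from connectedComponentIn_eq hyT]
    exact connectedComponentIn_mem_nhds
      (Filter.mem_of_superset (hU.mem_nhds hyU) subset_closure)
  have hTne : T.Nonempty := ⟨x, mem_connectedComponentIn hx⟩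
  have hinf := hT.sInf_mem hTne
  have hsup := hT.sSup_mem hTne
  have hmem_frontier : ∀ z ∈ T, z ∉ U → z ∈ frontier U := fun z hz hzU ↦
    hU.frontier_eq ▸ ⟨connectedComponentIn_subset _ _ hz, hzU⟩
  obtain ⟨y, hyT, hyU⟩ := connectedComponentIn_closure_inter_nonempty hU hfr hx
  refine ⟨sInf T, hmem_frontier _ hinf fun h ↦ ?_, sSup T, hmem_frontier _ hsup fun h ↦ ?_,
    (csInf_lt_of_mem_nhds hT.bddBelow (hT_nhds y ⟨hyT, hyU⟩)).trans
      (lt_csSup_of_mem_nhds hT.bddAbove (hT_nhds y ⟨hyT, hyU⟩)), hinf, hsup⟩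
  · exact (csInf_lt_of_mem_nhds hT.bddBelow (hT_nhds _ ⟨hinf, h⟩)).false
  · exact (lt_csSup_of_mem_nhds hT.bddAbove (hT_nhds _ ⟨hsup, h⟩)).false

theorem two_mul_card_connectedComponents_closure_le {U : Set ℝ} (hU : IsOpen U)
    (hb : IsBounded U) (hfr : (frontier U).Finite) :
    Finite (ConnectedComponents (closure U)) ∧
      2 * Nat.card (ConnectedComponents (closure U)) ≤ (frontier U).ncard := by
  have endpoints : ∀ K : ConnectedComponents (closure U), ∃ a b : closure U,
      (a : ℝ) ∈ frontier U ∧ (b : ℝ) ∈ frontier U ∧ (a : ℝ) < b ∧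
        ConnectedComponents.mk a = K ∧ ConnectedComponents.mk b = K := by
    intro K
    obtain ⟨⟨x, hx⟩, rfl⟩ := ConnectedComponents.surjective_coe K
    obtain ⟨a, ha, b, hb, hab, haK, hbK⟩ :=
      exists_frontier_lt_mem_connectedComponentIn_closure hU hb hfr hx
    rw [connectedComponentIn_eq_image hx] at haK hbK
    obtain ⟨a, haK, rfl⟩ := haK
    obtain ⟨b, hbK, rfl⟩ := hbK
    exact ⟨a, b, ha, hb, hab, ConnectedComponents.coe_eq_coe'.mpr haK,
      ConnectedComponents.coe_eq_coe'.mpr hbK⟩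
  choose a b ha hb hab haK hbK using endpoints
  let ψ : ConnectedComponents (closure U) × Bool → frontier U :=
    fun p ↦ bif p.2 then ⟨b p.1, hb p.1⟩ else ⟨a p.1, ha p.1⟩
  have same_component : ∀ {p q : closure U} {K K'}, ConnectedComponents.mk p = K →
      ConnectedComponents.mk q = K' → (p : ℝ) = q → K = K' := by
    rintro p q _ _ rfl rfl h
    rw [Subtype.ext h]
  have hψ : Injective ψ := by
    rintro ⟨K, _ | _⟩ ⟨K', _ | _⟩ h <;>
      simp only [ψ, cond_false, cond_true, Subtype.mk.injEq] at h
    · rw [same_component (haK K) (haK K') h]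
    · obtain rfl := same_component (haK K) (hbK K') h
      exact ((hab K).ne h).elim
    · obtain rfl := same_component (hbK K) (haK K') h
      exact ((hab K).ne' h).elim
    · rw [same_component (hbK K) (hbK K') h]
  have := hfr.to_subtype
  have := Finite.of_injective ψ hψ
  refine ⟨Finite.prod_left Bool, ?_⟩
  have := Nat.card_le_card_of_injective ψ hψ
  rwa [Nat.card_prod, Nat.card_eq_fintype_card (α := Bool), Fintype.card_bool, mul_comm,
    Nat.card_coe_set_eq] at this

end Real

theorem AddCircle.two_mul_card_connectedComponents_closure_le {p : ℝ} [Fact (0 < p)]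
    {S : Set (AddCircle p)} (hS : IsOpen S) (hfr : (frontier S).Finite) (hC : closure S ≠ univ) :
    Finite (ConnectedComponents (closure S)) ∧
      2 * Nat.card (ConnectedComponents (closure S)) ≤ (frontier S).ncard := by
  obtain ⟨θ, hθ⟩ := (ne_univ_iff_exists_notMem _).mp hC
  obtain ⟨t₀, rfl⟩ := QuotientAddGroup.mk_surjective θ
  have hπ : Continuous ((↑) : ℝ → AddCircle p) := AddCircle.continuous_mk' p
  have hpre : (↑) ⁻¹' closure S = closure (((↑) : ℝ → AddCircle p) ⁻¹' S) :=
    QuotientAddGroup.isOpenMap_coe.preimage_closure_eq_closure_preimage hπ S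
  set U := Ioo t₀ (t₀ + p) ∩ (↑) ⁻¹' S
  have hU : IsOpen U := isOpen_Ioo.inter (hS.preimage hπ)
  have hclU : closure U ⊆ Ioo t₀ (t₀ + p) ∩ (↑) ⁻¹' closure S := by
    intro t ht
    have htS : t ∈ (↑) ⁻¹' closure S := hpre ▸ closure_mono inter_subset_right ht
    have htIcc : t ∈ Icc t₀ (t₀ + p) :=
      closure_Ioo (lt_add_of_pos_right t₀ (Fact.out : 0 < p)).ne ▸
        closure_mono inter_subset_left ht
    refine ⟨⟨htIcc.1.lt_of_ne ?_, htIcc.2.lt_of_ne ?_⟩, htS⟩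
    · rintro rfl; exact hθ htS
    · rintro rfl; exact hθ (by simpa [AddCircle.coe_add_period] using htS)
  have hfrU : frontier U ⊆ Ioo t₀ (t₀ + p) ∩ (↑) ⁻¹' frontier S := by
    rw [hU.frontier_eq, hS.frontier_eq]
    rintro t ⟨ht, htU⟩
    exact ⟨(hclU ht).1, (hclU ht).2, fun htS ↦ htU ⟨(hclU ht).1, htS⟩⟩
  have hinj : InjOn ((↑) : ℝ → AddCircle p) (Ioo t₀ (t₀ + p)) := fun x hx y hy h ↦
    (AddCircle.coe_eq_coe_iff_of_mem_Ico (Ioo_subset_Ico_self hx) (Ioo_subset_Ico_self hy)).mp h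
  have hfrU_fin : (frontier U).Finite :=
    Finite.of_finite_image (hfr.subset (image_subset_iff.mpr fun t ht ↦ (hfrU ht).2))
      (hinj.mono fun t ht ↦ (hfrU ht).1)
  let φ : closure U → closure S := fun t ↦ ⟨t, (hclU t.2).2⟩
  have hφ : Continuous φ := (hπ.comp continuous_subtype_val).subtype_mk _
  have hφ_surj : Surjective φ := by
    rintro ⟨y, hy⟩
    set e := AddCircle.openPartialHomeomorphCoe p t₀
    have hye : y ∈ e.target := fun h ↦ hθ (h ▸ hy)
    have hs : e.symm y ∈ closure U := isOpen_Ioo.inter_closure ⟨e.map_target hye, ?_⟩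
    · exact ⟨⟨_, hs⟩, Subtype.ext (e.right_inv hye)⟩
    · rw [← hpre, mem_preimage]
      convert hy using 1
      exact e.right_inv hye
  obtain ⟨hfin, hcard⟩ := Real.two_mul_card_connectedComponents_closure_le hU
    (Metric.isBounded_Ioo t₀ (t₀ + p) |>.subset inter_subset_left) hfrU_fin
  have hsurj := hφ.connectedComponentsMap_surjective hφ_surj
  refine ⟨Finite.of_surjective _ hsurj, ?_⟩
  calc 2 * Nat.card (ConnectedComponents (closure S))
      ≤ 2 * Nat.card (ConnectedComponents (closure U)) := by
        gcongr; exact Nat.card_le_card_of_surjective _ hsurj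
    _ ≤ (frontier U).ncard := hcard
    _ ≤ (frontier S).ncard :=
        ncard_le_ncard_of_injOn _ (fun t ht ↦ (hfrU ht).2)
          (hinj.mono fun t ht ↦ (hfrU ht).1) hfr

/-- If `f` is a continuous real-valued function on the circle
`ℝ/2πℤ` whose zero set is finite with at most `2n` elements (`n ≥ 1`), then the
closure of `{x | f x < 0}` has at most `n` connected components. -/
theorem sublevel_closure_components_le
    (n : ℕ) (hn : 1 ≤ n) (f : AddCircle (2 * Real.pi) → ℝ) (hf : Continuous f)
    (hfin : {x : AddCircle (2 * Real.pi) | f x = 0}.Finite)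
    (hcard : {x : AddCircle (2 * Real.pi) | f x = 0}.ncard ≤ 2 * n) :
    Finite (ConnectedComponents
        (closure {x : AddCircle (2 * Real.pi) | f x < 0})) ∧
      Nat.card (ConnectedComponents
        (closure {x : AddCircle (2 * Real.pi) | f x < 0})) ≤ n := by
  have : Fact (0 < 2 * Real.pi) := ⟨Real.two_pi_pos⟩
  have hfr : frontier {x | f x < 0} ⊆ {x | f x = 0} := frontier_lt_subset_eq hf continuous_const
  by_cases hC : closure {x | f x < 0} = univ
  · have : PreconnectedSpace (closure {x | f x < 0}) :=
      Subtype.preconnectedSpace (hC ▸ isPreconnected_univ)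
    exact ⟨inferInstance, Finite.card_le_one_iff_subsingleton.mpr inferInstance |>.trans hn⟩
  · obtain ⟨hfinC, hcardC⟩ := AddCircle.two_mul_card_connectedComponents_closure_le
      (isOpen_lt hf continuous_const) (hfin.subset hfr) hC
    exact ⟨hfinC, by linarith [ncard_le_ncard hfr hfin]⟩
end

section
/- Let E : ℝ × ℝ → ℝ be twice continuously differentiable on a neighborhood of (x₀, L₀) with E(x₀, L₀) = 0, ∂E/∂L(x₀, L₀) = 0, ∂²E/∂L²(x₀, L₀) > 0, and ∂E/∂x(x₀, L₀) < 0. Then there exist δ > 0, ρ > 0 and continuously differentiable functions L₋, L₊ : (x₀, x₀ + δ) → (L₀ − ρ, L₀ + ρ) with L₋(x) < L₊(x), such that for every x ∈ (x₀, x₀ + δ): (i) {L ∈ (L₀ − ρ, L₀ + ρ) : E(x, L) = 0} = {L₋(x), L₊(x)}; (ii) L₋(x) → L₀ and L₊(x) → L₀ as x → x₀⁺; (iii) L₊'(x) → +∞ and L₋'(x) → −∞ as x → x₀⁺; and (iv) (L₊(x) − L₋(x))/√(x − x₀) → 2√(2·|∂E/∂x(x₀, L₀)| / ∂²E/∂L²(x₀,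 L₀)) as x → x₀⁺. (As an eclipsing arc shrinks to zero length, the root branches of the eclipsing function merge and the Leibniz boundary derivatives dL*/dx of the averaged costate dynamics become singular.) -/
/-!
For `x` slightly larger than `x₀`, the slice `L ↦ E (x, L)` is convex on `[L₀ - ρ, L₀ + ρ]`
(because `∂²E/∂L² > 0` near the fold point), negative at `L₀` (because `∂E/∂x(x₀, L₀) < 0`) and
positive at `L₀ ± ρ` (because `E (x₀, ·)` has a strict minimum `0` at `L₀`). Such a slice has
exactly two zeros, one on each side of `L₀`, and `∂E/∂L` has opposite signs there. The implicit
function theorem makes both zeros `C¹` in `x`, with slope `-(∂E/∂x)/(∂E/∂L)`; as `x → x₀⁺` the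
numerator tends to `∂E/∂x(x₀, L₀) < 0` while the denominator tends to `0` from either side, so the
slopes blow up. Finally, at a zero `L` Taylor's formula with Lagrange remainder in the second
variable reads `-E(x, L₀) - ∂E/∂L(x, L₀) (L - L₀) = ½ ∂²E/∂L²(x, η) (L - L₀)²`; after division
by `x - x₀` the left side tends to `|∂E/∂x(x₀, L₀)|`, so `(L - L₀)² / (x - x₀)` tends to
`2 |∂E/∂x| / ∂²E/∂L²` on both branches.
-/

open Filter Topology Set

theorem exists_ratio_hasDerivAt_eq_ratio_slope_uIoo {f f' g g' : ℝ → ℝ} {a b : ℝ} (hab : a ≠ b)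
    (hf : ∀ t ∈ uIcc a b, HasDerivAt f (f' t) t) (hg : ∀ t ∈ uIcc a b, HasDerivAt g (g' t) t) :
    ∃ c ∈ uIoo a b, (g b - g a) * f' c = (f b - f a) * g' c := by
  wlog h : a < b generalizing a b
  · obtain ⟨c, hc, hc'⟩ := this hab.symm (uIcc_comm a b ▸ hf) (uIcc_comm a b ▸ hg)
      (lt_of_le_of_ne (not_lt.1 h) hab.symm)
    exact ⟨c, uIoo_comm a b ▸ hc, by linear_combination -hc'⟩
  rw [uIcc_of_le h.le] at hf hg
  rw [uIoo_of_lt h]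
  exact exists_ratio_hasDerivAt_eq_ratio_slope f f' h
    (fun t ht => (hf t ht).continuousAt.continuousWithinAt)
    (fun t ht => hf t (Ioo_subset_Icc_self ht)) g g'
    (fun t ht => (hg t ht).continuousAt.continuousWithinAt)
    (fun t ht => hg t (Ioo_subset_Icc_self ht))

theorem exists_taylor_two_lagrange {f f' f'' : ℝ → ℝ} {a b : ℝ}
    (hf : ∀ t ∈ uIcc a b, HasDerivAt f (f' t) t) (hf' : ∀ t ∈ uIcc a b, HasDerivAt f' (f'' t) t) :
    ∃ η ∈ uIcc a b, f b - f a - f' a * (b - a) = f'' η / 2 * (b - a) ^ 2 := by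
  rcases eq_or_ne a b with rfl | hab
  · exact ⟨a, left_mem_uIcc, by ring⟩
  obtain ⟨ξ, hξ, hcauchy⟩ := exists_ratio_hasDerivAt_eq_ratio_slope_uIoo hab
    (f := fun t => f t - f' a * t) (f' := fun t => f' t - f' a)
    (g := fun t => (t - a) ^ 2) (g' := fun t => 2 * (t - a))
    (fun t ht => ((hf t ht).sub ((hasDerivAt_id' t).const_mul (f' a))).congr_deriv (by ring))
    (fun t _ => (((hasDerivAt_id' t).sub_const a).pow 2).congr_deriv (by ring))
  have hξa : a ≠ ξ := fun h => left_notMem_uIoo (h ▸ hξ)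
  have hsub : uIcc a ξ ⊆ uIcc a b := uIcc_subset_uIcc left_mem_uIcc (uIoo_subset_uIcc_self hξ)
  obtain ⟨η, hη, hmvt⟩ := exists_ratio_hasDerivAt_eq_ratio_slope_uIoo hξa
    (fun t ht => hf' t (hsub ht)) (g := id) (g' := fun _ => 1) (fun t _ => hasDerivAt_id t)
  refine ⟨η, hsub (uIoo_subset_uIcc_self hη), ?_⟩
  have key : (ξ - a) * (2 * (f b - f a - f' a * (b - a)) - f'' η * (b - a) ^ 2) = 0 := by
    simp only [id] at hmvt
    linear_combination -hcauchy - (b - a) ^ 2 * hmvt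
  rcases mul_eq_zero.1 key with h | h
  · exact absurd (sub_eq_zero.1 h).symm hξa
  · linarith

theorem ConvexOn.apply_neg_of_mem_openSegment {E : Type*} [AddCommGroup E] [Module ℝ E]
    {s : Set E} {f : E → ℝ} (hf : ConvexOn ℝ s f) {m u t : E} (hm : m ∈ s) (hu : u ∈ s)
    (hfm : f m < 0) (hfu : f u ≤ 0) (ht : t ∈ openSegment ℝ m u) : f t < 0 := by
  obtain ⟨a, b, ha, hb, hab, rfl⟩ := ht
  calc f (a • m + b • u) ≤ a • f m + b • f u := hf.2 hm hu ha.le hb.le hab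
    _ < 0 := by simp only [smul_eq_mul]; nlinarith

theorem ConvexOn.zeroSet_eq_pair {f : ℝ → ℝ} {a m b : ℝ} (hf : ConvexOn ℝ (Icc a b) f)
    (hfc : ContinuousOn f (Icc a b)) (hm : m ∈ Ioo a b) (ha : 0 < f a) (hfm : f m < 0)
    (hb : 0 < f b) : ∃ r ∈ Ioo a m, ∃ s ∈ Ioo m b, {t ∈ Ioo a b | f t = 0} = {r, s} := by
  obtain ⟨r, hr, hr0⟩ := intermediate_value_Ioo' hm.1.le
    (hfc.mono (Icc_subset_Icc_right hm.2.le)) ⟨hfm, ha⟩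
  obtain ⟨s, hs, hs0⟩ := intermediate_value_Ioo hm.2.le
    (hfc.mono (Icc_subset_Icc_left hm.1.le)) ⟨hfm, hb⟩
  have hmI : m ∈ Icc a b := Ioo_subset_Icc_self hm
  -- of two zeros on the same side of `m`, the nearer one lies strictly between `m` and the
  -- other, where convexity forces `f < 0`
  have same_side : ∀ u ∈ Ioo a b, ∀ v ∈ Ioo a b, f u = 0 → f v = 0 → u < v →
      ¬m < u ∧ ¬v < m := by
    intro u hu v hv hu0 hv0 huv
    refine ⟨fun hmu => ?_, fun hvm => ?_⟩
    · have := hf.apply_neg_of_mem_openSegment hmI (Ioo_subset_Icc_self hv) hfm hv0.le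
        (by rw [openSegment_eq_Ioo (hmu.trans huv)]; exact ⟨hmu, huv⟩)
      linarith
    · have := hf.apply_neg_of_mem_openSegment hmI (Ioo_subset_Icc_self hu) hfm hu0.le
        (by rw [openSegment_symm, openSegment_eq_Ioo (huv.trans hvm)]; exact ⟨huv, hvm⟩)
      linarith
  have hrI : r ∈ Ioo a b := ⟨hr.1, hr.2.trans hm.2⟩
  have hsI : s ∈ Ioo a b := ⟨hm.1.trans hs.1, hs.2⟩
  refine ⟨r, hr, s, hs, Set.ext fun t => ⟨fun ⟨ht, ht0⟩ => ?_, ?_⟩⟩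
  · rcases lt_trichotomy t m with htm | rfl | hmt
    · left
      rcases lt_trichotomy t r with h | h | h
      · exact absurd hr.2 (same_side t ht r hrI ht0 hr0 h).2
      · exact h
      · exact absurd htm (same_side r hrI t ht hr0 ht0 h).2
    · linarith
    · right
      rcases lt_trichotomy t s with h | h | h
      · exact absurd hmt (same_side t ht s hsI ht0 hs0 h).1
      · exact h
      · exact absurd hs.1 (same_side s hsI t ht hs0 ht0 h).1
  · rintro (rfl | rfl)
    · exact ⟨hrI, hr0⟩
    · exact ⟨hsI, hs0⟩

theorem ContinuousLinearMap.isInvertible_of_apply_one_ne_zero {𝕜 : Type*} [NormedField 𝕜]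
    {g : 𝕜 →L[𝕜] 𝕜} (h : g 1 ≠ 0) : g.IsInvertible :=
  ⟨ContinuousLinearEquiv.unitsEquivAut 𝕜 (Units.mk0 _ h), ContinuousLinearMap.ext_ring (by simp)⟩

theorem ContDiffAt.contDiffAt_of_eventually_apply_eq {𝕜 : Type*} [RCLike 𝕜]
    {E₁ E₂ F : Type*} [NormedAddCommGroup E₁] [NormedSpace 𝕜 E₁] [CompleteSpace E₁]
    [NormedAddCommGroup E₂] [NormedSpace 𝕜 E₂] [CompleteSpace E₂]
    [NormedAddCommGroup F] [NormedSpace 𝕜 F] [CompleteSpace F]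
    {f : E₁ × E₂ → F} {u : E₁ × E₂} {n : WithTop ℕ∞} (hf : ContDiffAt 𝕜 n f u) (hn : n ≠ 0)
    (hf₂ : (fderiv 𝕜 f u ∘L .inr 𝕜 E₁ E₂).IsInvertible) {W : E₁ → E₂}
    (hW : ∀ᶠ v in 𝓝 u, f v = f u → v.2 = W v.1) : ContDiffAt 𝕜 n W u.1 := by
  have hψ := hf.contDiffAt_implicitFunction hn hf₂
  have hgraph : Tendsto (fun x => (x, hf.implicitFunction hn hf₂ x)) (𝓝 u.1) (𝓝 u) := by
    simpa [hf.implicitFunction_apply_self] using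
      (continuousAt_id.prodMk hψ.continuousAt).tendsto
  refine hψ.congr_of_eventuallyEq ?_
  filter_upwards [hgraph.eventually hW, hf.eventually_apply_implicitFunction hn hf₂] with x h h'
  exact (h h').symm

theorem HasDerivAt.tendsto_div_sub {f : ℝ → ℝ} {f' a : ℝ} (hf : HasDerivAt f f' a)
    (ha : f a = 0) : Tendsto (fun x => f x / (x - a)) (𝓝[≠] a) (𝓝 f') :=
  (hasDerivAt_iff_tendsto_slope.1 hf).congr fun x => by rw [slope_def_field, ha, sub_zero]

theorem HasDerivAt.eventually_neg_nhdsGT {f : ℝ → ℝ} {f' a : ℝ} (hf : HasDerivAt f f' a)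
    (ha : f a = 0) (hf' : f' < 0) : ∀ᶠ x in 𝓝[>] a, f x < 0 := by
  have hslope := (hf.tendsto_div_sub ha).mono_left (nhdsWithin_mono _ fun _ h => ne_of_gt h)
  filter_upwards [hslope.eventually (gt_mem_nhds hf'), self_mem_nhdsWithin] with x hneg
    (hgt : a < x)
  exact ((div_neg_iff.1 hneg).resolve_left fun h => by linarith [h.2]).1

theorem Filter.Tendsto.div_sqrt_of_sq_div {α : Type*} {l : Filter α} {u v : α → ℝ} {q : ℝ}
    (h : Tendsto (fun x => u x ^ 2 / v x) l (𝓝 q)) (hu : ∀ᶠ x in l, 0 ≤ u x) :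
    Tendsto (fun x => u x / √(v x)) l (𝓝 √q) :=
  h.sqrt.congr' (hu.mono fun x hx => by rw [Real.sqrt_div (sq_nonneg _), Real.sqrt_sq hx])

noncomputable def partialFst (E : ℝ × ℝ → ℝ) (p : ℝ × ℝ) : ℝ := fderiv ℝ E p (1, 0)

noncomputable def partialSnd (E : ℝ × ℝ → ℝ) (p : ℝ × ℝ) : ℝ := fderiv ℝ E p (0, 1)

section Partial

variable {E : ℝ × ℝ → ℝ}

theorem hasDerivAt_partialFst {x L : ℝ} (h : DifferentiableAt ℝ E (x, L)) :
    HasDerivAt (fun x' => E (x', L)) (partialFst E (x, L)) x :=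
  h.hasFDerivAt.comp_hasDerivAt x ((hasDerivAt_id x).prodMk (hasDerivAt_const x L))

theorem hasDerivAt_partialSnd {x L : ℝ} (h : DifferentiableAt ℝ E (x, L)) :
    HasDerivAt (fun L' => E (x, L')) (partialSnd E (x, L)) L :=
  h.hasFDerivAt.comp_hasDerivAt L ((hasDerivAt_const L x).prodMk (hasDerivAt_id L))

theorem contDiffAt_partialFst {m n : WithTop ℕ∞} {p : ℝ × ℝ} (h : ContDiffAt ℝ n E p)
    (hmn : m + 1 ≤ n) : ContDiffAt ℝ m (partialFst E) p :=
  (h.fderiv_right hmn).clm_apply contDiffAt_const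

theorem contDiffAt_partialSnd {m n : WithTop ℕ∞} {p : ℝ × ℝ} (h : ContDiffAt ℝ n E p)
    (hmn : m + 1 ≤ n) : ContDiffAt ℝ m (partialSnd E) p :=
  (h.fderiv_right hmn).clm_apply contDiffAt_const

theorem differentiableAt_partialSnd {p : ℝ × ℝ} (h : ContDiffAt ℝ 2 E p) :
    DifferentiableAt ℝ (partialSnd E) p :=
  (contDiffAt_partialSnd h one_add_one_eq_two.le).differentiableAt one_ne_zero

theorem continuousAt_partialSnd_partialSnd {p : ℝ × ℝ} (h : ContDiffAt ℝ 2 E p) :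
    ContinuousAt (partialSnd (partialSnd E)) p :=
  (contDiffAt_partialSnd (contDiffAt_partialSnd h one_add_one_eq_two.le) (zero_add 1).le
    ).continuousAt

theorem deriv_deriv_slice {x L : ℝ} (hE : ∀ᶠ p in 𝓝 (x, L), ContDiffAt ℝ 2 E p) :
    deriv (deriv fun L' => E (x, L')) L = partialSnd (partialSnd E) (x, L) := by
  have hslice : (deriv fun L' => E (x, L')) =ᶠ[𝓝 L] fun L' => partialSnd E (x, L') :=
    (((continuous_const.prodMk continuous_id).tendsto L).eventually hE).mono fun L' h =>
      (hasDerivAt_partialSnd (h.differentiableAt two_ne_zero)).deriv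
  rw [hslice.deriv_eq]
  exact (hasDerivAt_partialSnd (differentiableAt_partialSnd hE.self_of_nhds)).deriv

theorem exists_slice_taylor {x a b : ℝ} (hE : ∀ L ∈ uIcc a b, ContDiffAt ℝ 2 E (x, L)) :
    ∃ η ∈ uIcc a b, E (x, b) - E (x, a) - partialSnd E (x, a) * (b - a) =
      partialSnd (partialSnd E) (x, η) / 2 * (b - a) ^ 2 :=
  exists_taylor_two_lagrange
    (fun L hL => hasDerivAt_partialSnd ((hE L hL).differentiableAt two_ne_zero))
    (fun L hL => hasDerivAt_partialSnd (differentiableAt_partialSnd (hE L hL)))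

theorem convexOn_slice_of_nonneg {x : ℝ} {s : Set ℝ} (hs : Convex ℝ s)
    (hE : ∀ L ∈ s, ContDiffAt ℝ 2 E (x, L))
    (hpos : ∀ L ∈ s, 0 ≤ partialSnd (partialSnd E) (x, L)) :
    ConvexOn ℝ s fun L => E (x, L) :=
  convexOn_of_hasDerivWithinAt2_nonneg hs
    (fun L hL => (hasDerivAt_partialSnd ((hE L hL).differentiableAt two_ne_zero)).continuousAt
      |>.continuousWithinAt)
    (fun L hL => (hasDerivAt_partialSnd
      ((hE L (interior_subset hL)).differentiableAt two_ne_zero)).hasDerivWithinAt)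
    (fun L hL => (hasDerivAt_partialSnd
      (differentiableAt_partialSnd (hE L (interior_subset hL)))).hasDerivWithinAt)
    (fun L hL => hpos L (interior_subset hL))

theorem apply_slice_pos_of_ne {x₀ L₀ L : ℝ} {s : Set ℝ} (hs : OrdConnected s)
    (hL₀ : L₀ ∈ s) (hL : L ∈ s) (hE : ∀ L' ∈ s, ContDiffAt ℝ 2 E (x₀, L'))
    (hpos : ∀ L' ∈ s, 0 < partialSnd (partialSnd E) (x₀, L')) (h0 : E (x₀, L₀) = 0)
    (h1 : partialSnd E (x₀, L₀) = 0) (hne : L ≠ L₀) : 0 < E (x₀, L) := by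
  have hsub : uIcc L₀ L ⊆ s := hs.uIcc_subset hL₀ hL
  obtain ⟨η, hη, htaylor⟩ := exists_slice_taylor fun L' hL' => hE L' (hsub hL')
  rw [h0, h1] at htaylor
  have := hpos η (hsub hη)
  have := pow_pos (abs_pos.2 (sub_ne_zero.2 hne)) 2
  rw [sq_abs] at this
  nlinarith

theorem hasDerivAt_of_eventually_apply_eq_zero {W : ℝ → ℝ} {x : ℝ}
    (hE : DifferentiableAt ℝ E (x, W x)) (hW : DifferentiableAt ℝ W x)
    (h0 : ∀ᶠ y in 𝓝 x, E (y, W y) = 0) (hne : partialSnd E (x, W x) ≠ 0) :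
    HasDerivAt W (-partialFst E (x, W x) / partialSnd E (x, W x)) x := by
  have hchain : HasDerivAt (fun y => E (y, W y)) (fderiv ℝ E (x, W x) (1, deriv W x)) x :=
    hE.hasFDerivAt.comp_hasDerivAt x ((hasDerivAt_id x).prodMk hW.hasDerivAt)
  have hzero : fderiv ℝ E (x, W x) (1, deriv W x) = 0 :=
    hchain.unique ((hasDerivAt_const x 0).congr_of_eventuallyEq h0)
  have hsplit : ((1 : ℝ), deriv W x) = ((1 : ℝ), (0 : ℝ)) + deriv W x • ((0 : ℝ), (1 : ℝ)) := by
    ext <;> simp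
  rw [hsplit, map_add, map_smul, smul_eq_mul] at hzero
  refine hW.hasDerivAt.congr_deriv ?_
  rw [eq_div_iff hne]
  unfold partialFst partialSnd
  linarith

theorem contDiffAt_of_forall_apply_eq_zero_iff {n : WithTop ℕ∞} {I J : Set ℝ} (hI : IsOpen I)
    (hJ : IsOpen J) {W : ℝ → ℝ} (hW : ∀ x ∈ I, ∀ L ∈ J, E (x, L) = 0 ↔ L = W x)
    (hWJ : ∀ x ∈ I, W x ∈ J) {x : ℝ} (hx : x ∈ I) (hE : ContDiffAt ℝ n E (x, W x)) (hn : n ≠ 0)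
    (hne : partialSnd E (x, W x) ≠ 0) : ContDiffAt ℝ n W x := by
  have hzero : E (x, W x) = 0 := (hW x hx _ (hWJ x hx)).2 rfl
  refine hE.contDiffAt_of_eventually_apply_eq (u := (x, W x)) hn
    (ContinuousLinearMap.isInvertible_of_apply_one_ne_zero hne) ?_
  filter_upwards [(hI.prod hJ).mem_nhds ⟨hx, hWJ x hx⟩] with v hv hEv
  exact (hW v.1 hv.1 v.2 hv.2).1 (hEv.trans hzero)

end Partial

/-- `Classical.epsilon` picks some zero of `E (x, ·)` in `(L₀ - ρ, L₀)`, and an arbitrary real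
number when there is none. -/
noncomputable def lowerRoot (E : ℝ × ℝ → ℝ) (L₀ ρ x : ℝ) : ℝ :=
  Classical.epsilon fun L => L ∈ Ioo (L₀ - ρ) L₀ ∧ E (x, L) = 0

noncomputable def upperRoot (E : ℝ × ℝ → ℝ) (L₀ ρ x : ℝ) : ℝ :=
  Classical.epsilon fun L => L ∈ Ioo L₀ (L₀ + ρ) ∧ E (x, L) = 0

structure IsFoldBox (E : ℝ × ℝ → ℝ) (x₀ L₀ δ ρ m : ℝ) : Prop where
  apply_center : E (x₀, L₀) = 0
  partialSnd_center : partialSnd E (x₀, L₀) = 0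
  partialFst_center_neg : partialFst E (x₀, L₀) < 0
  δ_pos : 0 < δ
  δ_le : δ ≤ ρ
  contDiffAt : ∀ p ∈ Icc (x₀ - ρ) (x₀ + ρ) ×ˢ Icc (L₀ - ρ) (L₀ + ρ), ContDiffAt ℝ 2 E p
  m_pos : 0 < m
  le_partialSnd_partialSnd :
    ∀ p ∈ Icc (x₀ - ρ) (x₀ + ρ) ×ˢ Icc (L₀ - ρ) (L₀ + ρ), m ≤ partialSnd (partialSnd E) p
  neg_on_center_line : ∀ x ∈ Ioo x₀ (x₀ + δ), E (x, L₀) < 0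
  pos_on_lower_edge : ∀ x ∈ Ioo x₀ (x₀ + δ), 0 < E (x, L₀ - ρ)
  pos_on_upper_edge : ∀ x ∈ Ioo x₀ (x₀ + δ), 0 < E (x, L₀ + ρ)

namespace IsFoldBox

variable {E : ℝ × ℝ → ℝ} {x₀ L₀ δ ρ m x L : ℝ}

theorem ρ_pos (hB : IsFoldBox E x₀ L₀ δ ρ m) : 0 < ρ := hB.δ_pos.trans_le hB.δ_le

theorem Ioo_mem_nhdsGT (hB : IsFoldBox E x₀ L₀ δ ρ m) : Ioo x₀ (x₀ + δ) ∈ 𝓝[>] x₀ :=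
  _root_.Ioo_mem_nhdsGT (by linarith [hB.δ_pos])

theorem center_mem_Icc (hB : IsFoldBox E x₀ L₀ δ ρ m) : L₀ ∈ Icc (L₀ - ρ) (L₀ + ρ) :=
  ⟨by linarith [hB.ρ_pos], by linarith [hB.ρ_pos]⟩

theorem center_mem_box (hB : IsFoldBox E x₀ L₀ δ ρ m) :
    (x₀, L₀) ∈ Icc (x₀ - ρ) (x₀ + ρ) ×ˢ Icc (L₀ - ρ) (L₀ + ρ) :=
  ⟨⟨by linarith [hB.ρ_pos], by linarith [hB.ρ_pos]⟩, hB.center_mem_Icc⟩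

theorem mem_box (hB : IsFoldBox E x₀ L₀ δ ρ m) (hx : x ∈ Ioo x₀ (x₀ + δ))
    (hL : L ∈ Icc (L₀ - ρ) (L₀ + ρ)) :
    (x, L) ∈ Icc (x₀ - ρ) (x₀ + ρ) ×ˢ Icc (L₀ - ρ) (L₀ + ρ) :=
  ⟨⟨by linarith [hx.1, hB.ρ_pos], by linarith [hx.2, hB.δ_le]⟩, hL⟩

theorem contDiffAt_slice (hB : IsFoldBox E x₀ L₀ δ ρ m) (hx : x ∈ Ioo x₀ (x₀ + δ)) :
    ∀ L ∈ Icc (L₀ - ρ) (L₀ + ρ), ContDiffAt ℝ 2 E (x, L) :=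
  fun _ hL => hB.contDiffAt _ (hB.mem_box hx hL)

theorem convexOn_slice (hB : IsFoldBox E x₀ L₀ δ ρ m) (hx : x ∈ Ioo x₀ (x₀ + δ)) :
    ConvexOn ℝ (Icc (L₀ - ρ) (L₀ + ρ)) fun L => E (x, L) :=
  convexOn_slice_of_nonneg (convex_Icc _ _) (hB.contDiffAt_slice hx)
    fun _ hL => hB.m_pos.le.trans (hB.le_partialSnd_partialSnd _ (hB.mem_box hx hL))

theorem exists_zeroSet_eq_pair (hB : IsFoldBox E x₀ L₀ δ ρ m) (hx : x ∈ Ioo x₀ (x₀ + δ)) :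
    ∃ r ∈ Ioo (L₀ - ρ) L₀, ∃ s ∈ Ioo L₀ (L₀ + ρ),
      {L ∈ Ioo (L₀ - ρ) (L₀ + ρ) | E (x, L) = 0} = {r, s} :=
  (hB.convexOn_slice hx).zeroSet_eq_pair
    (fun L hL => ((hB.contDiffAt_slice hx L hL).continuousAt.comp
      (continuous_const.prodMk continuous_id).continuousAt).continuousWithinAt)
    ⟨by linarith [hB.ρ_pos], by linarith [hB.ρ_pos]⟩ (hB.pos_on_lower_edge x hx)
    (hB.neg_on_center_line x hx) (hB.pos_on_upper_edge x hx)

theorem lowerRoot_spec (hB : IsFoldBox E x₀ L₀ δ ρ m) (hx : x ∈ Ioo x₀ (x₀ + δ)) :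
    lowerRoot E L₀ ρ x ∈ Ioo (L₀ - ρ) L₀ ∧ E (x, lowerRoot E L₀ ρ x) = 0 := by
  obtain ⟨r, hr, s, -, hset⟩ := hB.exists_zeroSet_eq_pair hx
  have hr0 : r ∈ {L ∈ Ioo (L₀ - ρ) (L₀ + ρ) | E (x, L) = 0} := hset ▸ Or.inl rfl
  exact Classical.epsilon_spec (p := fun L => L ∈ Ioo (L₀ - ρ) L₀ ∧ E (x, L) = 0) ⟨r, hr, hr0.2⟩

theorem upperRoot_spec (hB : IsFoldBox E x₀ L₀ δ ρ m) (hx : x ∈ Ioo x₀ (x₀ + δ)) :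
    upperRoot E L₀ ρ x ∈ Ioo L₀ (L₀ + ρ) ∧ E (x, upperRoot E L₀ ρ x) = 0 := by
  obtain ⟨r, -, s, hs, hset⟩ := hB.exists_zeroSet_eq_pair hx
  have hs0 : s ∈ {L ∈ Ioo (L₀ - ρ) (L₀ + ρ) | E (x, L) = 0} := hset ▸ Or.inr rfl
  exact Classical.epsilon_spec (p := fun L => L ∈ Ioo L₀ (L₀ + ρ) ∧ E (x, L) = 0) ⟨s, hs, hs0.2⟩

theorem lowerRoot_mem_Ioo (hB : IsFoldBox E x₀ L₀ δ ρ m) (hx : x ∈ Ioo x₀ (x₀ + δ)) :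
    lowerRoot E L₀ ρ x ∈ Ioo (L₀ - ρ) (L₀ + ρ) :=
  ⟨(hB.lowerRoot_spec hx).1.1, by linarith [(hB.lowerRoot_spec hx).1.2, hB.ρ_pos]⟩

theorem upperRoot_mem_Ioo (hB : IsFoldBox E x₀ L₀ δ ρ m) (hx : x ∈ Ioo x₀ (x₀ + δ)) :
    upperRoot E L₀ ρ x ∈ Ioo (L₀ - ρ) (L₀ + ρ) :=
  ⟨by linarith [(hB.upperRoot_spec hx).1.1, hB.ρ_pos], (hB.upperRoot_spec hx).1.2⟩

theorem lowerRoot_mem_and_apply_eq_zero (hB : IsFoldBox E x₀ L₀ δ ρ m) :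
    ∀ x ∈ Ioo x₀ (x₀ + δ),
      lowerRoot E L₀ ρ x ∈ Icc (L₀ - ρ) (L₀ + ρ) ∧ E (x, lowerRoot E L₀ ρ x) = 0 :=
  fun _ hx => ⟨Ioo_subset_Icc_self (hB.lowerRoot_mem_Ioo hx), (hB.lowerRoot_spec hx).2⟩

theorem upperRoot_mem_and_apply_eq_zero (hB : IsFoldBox E x₀ L₀ δ ρ m) :
    ∀ x ∈ Ioo x₀ (x₀ + δ),
      upperRoot E L₀ ρ x ∈ Icc (L₀ - ρ) (L₀ + ρ) ∧ E (x, upperRoot E L₀ ρ x) = 0 :=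
  fun _ hx => ⟨Ioo_subset_Icc_self (hB.upperRoot_mem_Ioo hx), (hB.upperRoot_spec hx).2⟩

theorem zeroSet_eq (hB : IsFoldBox E x₀ L₀ δ ρ m) (hx : x ∈ Ioo x₀ (x₀ + δ)) :
    {L ∈ Ioo (L₀ - ρ) (L₀ + ρ) | E (x, L) = 0} = {lowerRoot E L₀ ρ x, upperRoot E L₀ ρ x} := by
  obtain ⟨r, hr, s, hs, hset⟩ := hB.exists_zeroSet_eq_pair hx
  obtain ⟨hlo, hlo0⟩ := hB.lowerRoot_spec hx
  obtain ⟨hup, hup0⟩ := hB.upperRoot_spec hx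
  have hlo' : lowerRoot E L₀ ρ x ∈ ({r, s} : Set ℝ) := hset ▸ ⟨hB.lowerRoot_mem_Ioo hx, hlo0⟩
  have hup' : upperRoot E L₀ ρ x ∈ ({r, s} : Set ℝ) := hset ▸ ⟨hB.upperRoot_mem_Ioo hx, hup0⟩
  have hlo_eq : lowerRoot E L₀ ρ x = r :=
    hlo'.resolve_right fun h => by linarith [hlo.2, hs.1, mem_singleton_iff.1 h]
  have hup_eq : upperRoot E L₀ ρ x = s :=
    mem_singleton_iff.1 (hup'.resolve_left fun h => by linarith [hup.1, hr.2, h])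
  rw [hset, hlo_eq, hup_eq]

theorem lowerRoot_iff (hB : IsFoldBox E x₀ L₀ δ ρ m) (hx : x ∈ Ioo x₀ (x₀ + δ))
    (hL : L ∈ Ioo (L₀ - ρ) L₀) : E (x, L) = 0 ↔ L = lowerRoot E L₀ ρ x := by
  refine ⟨fun h0 => ?_, fun h => h ▸ (hB.lowerRoot_spec hx).2⟩
  have hmem : L ∈ {L ∈ Ioo (L₀ - ρ) (L₀ + ρ) | E (x, L) = 0} :=
    ⟨⟨hL.1, by linarith [hL.2, hB.ρ_pos]⟩, h0⟩
  rw [hB.zeroSet_eq hx] at hmem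
  exact hmem.resolve_right fun h => by
    linarith [hL.2, (hB.upperRoot_spec hx).1.1, mem_singleton_iff.1 h]

theorem upperRoot_iff (hB : IsFoldBox E x₀ L₀ δ ρ m) (hx : x ∈ Ioo x₀ (x₀ + δ))
    (hL : L ∈ Ioo L₀ (L₀ + ρ)) : E (x, L) = 0 ↔ L = upperRoot E L₀ ρ x := by
  refine ⟨fun h0 => ?_, fun h => h ▸ (hB.upperRoot_spec hx).2⟩
  have hmem : L ∈ {L ∈ Ioo (L₀ - ρ) (L₀ + ρ) | E (x, L) = 0} :=
    ⟨⟨by linarith [hL.1, hB.ρ_pos], hL.2⟩, h0⟩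
  rw [hB.zeroSet_eq hx] at hmem
  exact mem_singleton_iff.1 (hmem.resolve_left fun h => by
    linarith [hL.1, (hB.lowerRoot_spec hx).1.2, h])

theorem partialSnd_lowerRoot_neg (hB : IsFoldBox E x₀ L₀ δ ρ m) (hx : x ∈ Ioo x₀ (x₀ + δ)) :
    partialSnd E (x, lowerRoot E L₀ ρ x) < 0 := by
  obtain ⟨hlo, hlo0⟩ := hB.lowerRoot_spec hx
  have hloI := Ioo_subset_Icc_self (hB.lowerRoot_mem_Ioo hx)
  have hslope := (hB.convexOn_slice hx).le_slope_of_hasDerivAt hloI hB.center_mem_Icc hlo.2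
    (hasDerivAt_partialSnd ((hB.contDiffAt_slice hx _ hloI).differentiableAt two_ne_zero))
  rw [slope_def_field, hlo0, sub_zero] at hslope
  exact hslope.trans_lt
    (div_neg_of_neg_of_pos (hB.neg_on_center_line x hx) (by linarith [hlo.2]))

theorem partialSnd_upperRoot_pos (hB : IsFoldBox E x₀ L₀ δ ρ m) (hx : x ∈ Ioo x₀ (x₀ + δ)) :
    0 < partialSnd E (x, upperRoot E L₀ ρ x) := by
  obtain ⟨hup, hup0⟩ := hB.upperRoot_spec hx
  have hupI := Ioo_subset_Icc_self (hB.upperRoot_mem_Ioo hx)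
  have hslope := (hB.convexOn_slice hx).slope_le_of_hasDerivAt hB.center_mem_Icc hupI hup.1
    (hasDerivAt_partialSnd ((hB.contDiffAt_slice hx _ hupI).differentiableAt two_ne_zero))
  rw [slope_def_field, hup0, zero_sub] at hslope
  exact (div_pos (neg_pos.2 (hB.neg_on_center_line x hx)) (by linarith [hup.1])).trans_le hslope

theorem contDiffAt_lowerRoot (hB : IsFoldBox E x₀ L₀ δ ρ m) (hx : x ∈ Ioo x₀ (x₀ + δ)) :
    ContDiffAt ℝ 2 (lowerRoot E L₀ ρ) x :=
  contDiffAt_of_forall_apply_eq_zero_iff isOpen_Ioo isOpen_Ioo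
    (fun _ hy _ hL => hB.lowerRoot_iff hy hL) (fun _ hy => (hB.lowerRoot_spec hy).1) hx
    (hB.contDiffAt_slice hx _ (hB.lowerRoot_mem_and_apply_eq_zero x hx).1) two_ne_zero
    (hB.partialSnd_lowerRoot_neg hx).ne

theorem contDiffAt_upperRoot (hB : IsFoldBox E x₀ L₀ δ ρ m) (hx : x ∈ Ioo x₀ (x₀ + δ)) :
    ContDiffAt ℝ 2 (upperRoot E L₀ ρ) x :=
  contDiffAt_of_forall_apply_eq_zero_iff isOpen_Ioo isOpen_Ioo
    (fun _ hy _ hL => hB.upperRoot_iff hy hL) (fun _ hy => (hB.upperRoot_spec hy).1) hx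
    (hB.contDiffAt_slice hx _ (hB.upperRoot_mem_and_apply_eq_zero x hx).1) two_ne_zero
    (hB.partialSnd_upperRoot_pos hx).ne'

theorem hasDerivAt_lowerRoot (hB : IsFoldBox E x₀ L₀ δ ρ m) (hx : x ∈ Ioo x₀ (x₀ + δ)) :
    HasDerivAt (lowerRoot E L₀ ρ)
      (-partialFst E (x, lowerRoot E L₀ ρ x) / partialSnd E (x, lowerRoot E L₀ ρ x)) x :=
  hasDerivAt_of_eventually_apply_eq_zero
    ((hB.contDiffAt_slice hx _ (hB.lowerRoot_mem_and_apply_eq_zero x hx).1).differentiableAt two_ne_zero)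
    ((hB.contDiffAt_lowerRoot hx).differentiableAt two_ne_zero)
    (eventually_of_mem (isOpen_Ioo.mem_nhds hx) fun _ hy => (hB.lowerRoot_spec hy).2)
    (hB.partialSnd_lowerRoot_neg hx).ne

theorem hasDerivAt_upperRoot (hB : IsFoldBox E x₀ L₀ δ ρ m) (hx : x ∈ Ioo x₀ (x₀ + δ)) :
    HasDerivAt (upperRoot E L₀ ρ)
      (-partialFst E (x, upperRoot E L₀ ρ x) / partialSnd E (x, upperRoot E L₀ ρ x)) x :=
  hasDerivAt_of_eventually_apply_eq_zero
    ((hB.contDiffAt_slice hx _ (hB.upperRoot_mem_and_apply_eq_zero x hx).1).differentiableAt two_ne_zero)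
    ((hB.contDiffAt_upperRoot hx).differentiableAt two_ne_zero)
    (eventually_of_mem (isOpen_Ioo.mem_nhds hx) fun _ hy => (hB.upperRoot_spec hy).2)
    (hB.partialSnd_upperRoot_pos hx).ne'

theorem exists_taylor_along (hB : IsFoldBox E x₀ L₀ δ ρ m) {W : ℝ → ℝ}
    (hW : ∀ x ∈ Ioo x₀ (x₀ + δ), W x ∈ Icc (L₀ - ρ) (L₀ + ρ) ∧ E (x, W x) = 0) :
    ∃ η : ℝ → ℝ, ∀ x ∈ Ioo x₀ (x₀ + δ), η x ∈ uIcc L₀ (W x) ∧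
      -E (x, L₀) - partialSnd E (x, L₀) * (W x - L₀) =
        partialSnd (partialSnd E) (x, η x) / 2 * (W x - L₀) ^ 2 := by
  have h : ∀ x, ∃ η, x ∈ Ioo x₀ (x₀ + δ) → η ∈ uIcc L₀ (W x) ∧
      -E (x, L₀) - partialSnd E (x, L₀) * (W x - L₀) =
        partialSnd (partialSnd E) (x, η) / 2 * (W x - L₀) ^ 2 := by
    intro x
    by_cases hx : x ∈ Ioo x₀ (x₀ + δ)
    · obtain ⟨η, hη, htaylor⟩ := exists_slice_taylor fun L hL =>
        hB.contDiffAt_slice hx L (uIcc_subset_Icc hB.center_mem_Icc (hW x hx).1 hL)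
      rw [(hW x hx).2, zero_sub] at htaylor
      exact ⟨η, fun _ => ⟨hη, htaylor⟩⟩
    · exact ⟨L₀, fun h => absurd h hx⟩
  choose η hη using h
  exact ⟨η, hη⟩

theorem tendsto_of_apply_eq_zero (hB : IsFoldBox E x₀ L₀ δ ρ m) {W : ℝ → ℝ}
    (hW : ∀ x ∈ Ioo x₀ (x₀ + δ), W x ∈ Icc (L₀ - ρ) (L₀ + ρ) ∧ E (x, W x) = 0) :
    Tendsto W (𝓝[>] x₀) (𝓝 L₀) := by
  set K : ℝ → ℝ := fun x => 2 / m * (|E (x, L₀)| + ρ * |partialSnd E (x, L₀)|)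
  have hline : Tendsto (fun x : ℝ => (x, L₀)) (𝓝[>] x₀) (𝓝 (x₀, L₀)) :=
    ((continuous_id.prodMk continuous_const).tendsto x₀).mono_left nhdsWithin_le_nhds
  have hcenter := hB.contDiffAt _ hB.center_mem_box
  have hK : Tendsto K (𝓝[>] x₀) (𝓝 0) := by
    have hE₀ := hcenter.continuousAt.tendsto.comp hline
    have hEL₀ := (differentiableAt_partialSnd hcenter).continuousAt.tendsto.comp hline
    simpa [hB.apply_center, hB.partialSnd_center] using
      ((hE₀.abs.add (hEL₀.abs.const_mul ρ)).const_mul (2 / m))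
  obtain ⟨η, hη⟩ := hB.exists_taylor_along hW
  have hbound : ∀ x ∈ Ioo x₀ (x₀ + δ), (W x - L₀) ^ 2 ≤ K x := by
    intro x hx
    obtain ⟨hηx, htaylor⟩ := hη x hx
    have hm := hB.le_partialSnd_partialSnd _
      (hB.mem_box hx (uIcc_subset_Icc hB.center_mem_Icc (hW x hx).1 hηx))
    have hdev : |W x - L₀| ≤ ρ :=
      abs_sub_le_iff.2 ⟨by linarith [(hW x hx).1.2], by linarith [(hW x hx).1.1]⟩
    have hprod : -(partialSnd E (x, L₀) * (W x - L₀)) ≤ ρ * |partialSnd E (x, L₀)| :=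
      calc -(partialSnd E (x, L₀) * (W x - L₀))
          ≤ |partialSnd E (x, L₀)| * |W x - L₀| := (neg_le_abs _).trans_eq (abs_mul _ _)
        _ ≤ ρ * |partialSnd E (x, L₀)| := by
          rw [mul_comm]; exact mul_le_mul_of_nonneg_right hdev (abs_nonneg _)
    have hsq : m * (W x - L₀) ^ 2 ≤ 2 * (|E (x, L₀)| + ρ * |partialSnd E (x, L₀)|) := by
      nlinarith [neg_le_abs (E (x, L₀)), sq_nonneg (W x - L₀)]
    simp only [K]
    rw [div_mul_eq_mul_div, le_div_iff₀ hB.m_pos]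
    linarith
  refine tendsto_iff_dist_tendsto_zero.2 (squeeze_zero' (Eventually.of_forall fun _ =>
    dist_nonneg) ?_ (by simpa using hK.sqrt))
  filter_upwards [hB.Ioo_mem_nhdsGT] with x hx
  exact Real.abs_le_sqrt (hbound x hx)

theorem tendsto_lowerRoot (hB : IsFoldBox E x₀ L₀ δ ρ m) :
    Tendsto (lowerRoot E L₀ ρ) (𝓝[>] x₀) (𝓝 L₀) :=
  hB.tendsto_of_apply_eq_zero hB.lowerRoot_mem_and_apply_eq_zero

theorem tendsto_upperRoot (hB : IsFoldBox E x₀ L₀ δ ρ m) :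
    Tendsto (upperRoot E L₀ ρ) (𝓝[>] x₀) (𝓝 L₀) :=
  hB.tendsto_of_apply_eq_zero hB.upperRoot_mem_and_apply_eq_zero

theorem tendsto_sq_div_of_apply_eq_zero (hB : IsFoldBox E x₀ L₀ δ ρ m) {W : ℝ → ℝ}
    (hW : ∀ x ∈ Ioo x₀ (x₀ + δ), W x ∈ Icc (L₀ - ρ) (L₀ + ρ) ∧ E (x, W x) = 0) :
    Tendsto (fun x => (W x - L₀) ^ 2 / (x - x₀)) (𝓝[>] x₀)
      (𝓝 (-partialFst E (x₀, L₀) / (partialSnd (partialSnd E) (x₀, L₀) / 2))) := by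
  have hWlim := hB.tendsto_of_apply_eq_zero hW
  have hcenter := hB.contDiffAt _ hB.center_mem_box
  obtain ⟨η, hη⟩ := hB.exists_taylor_along hW
  have hηlim : Tendsto η (𝓝[>] x₀) (𝓝 L₀) := by
    refine tendsto_iff_dist_tendsto_zero.2 (squeeze_zero' (Eventually.of_forall fun _ =>
      dist_nonneg) ?_ (tendsto_iff_dist_tendsto_zero.1 hWlim))
    filter_upwards [hB.Ioo_mem_nhdsGT] with x hx
    simpa only [Real.dist_eq] using abs_sub_left_of_mem_uIcc (hη x hx).1
  have hcurv : Tendsto (fun x => partialSnd (partialSnd E) (x, η x) / 2) (𝓝[>] x₀)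
      (𝓝 (partialSnd (partialSnd E) (x₀, L₀) / 2)) :=
    ((continuousAt_partialSnd_partialSnd hcenter).tendsto.comp
      ((tendsto_id.mono_left nhdsWithin_le_nhds).prodMk_nhds hηlim)).div_const 2
  have hgt : 𝓝[>] x₀ ≤ 𝓝[≠] x₀ := nhdsWithin_mono _ fun _ h => ne_of_gt h
  have hE := ((hasDerivAt_partialFst (hcenter.differentiableAt two_ne_zero)).tendsto_div_sub
    hB.apply_center).mono_left hgt
  have hEL := ((hasDerivAt_partialFst (differentiableAt_partialSnd hcenter)).tendsto_div_sub
    hB.partialSnd_center).mono_left hgt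
  have hc : partialSnd (partialSnd E) (x₀, L₀) / 2 ≠ 0 :=
    (half_pos (hB.m_pos.trans_le (hB.le_partialSnd_partialSnd _ hB.center_mem_box))).ne'
  have hlim := (hE.neg.sub (hEL.mul (hWlim.sub_const L₀))).div hcurv hc
  rw [sub_self, mul_zero, sub_zero] at hlim
  refine hlim.congr' ?_
  filter_upwards [hB.Ioo_mem_nhdsGT] with x hx
  obtain ⟨hηx, htaylor⟩ := hη x hx
  have hpos : 0 < partialSnd (partialSnd E) (x, η x) := hB.m_pos.trans_le
    (hB.le_partialSnd_partialSnd _ (hB.mem_box hx (uIcc_subset_Icc hB.center_mem_Icc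
      (hW x hx).1 hηx)))
  have hd : x - x₀ ≠ 0 := (sub_pos.2 hx.1).ne'
  rw [Pi.div_apply]
  field_simp
  linear_combination 2 * htaylor

theorem tendsto_deriv_lowerRoot (hB : IsFoldBox E x₀ L₀ δ ρ m) :
    Tendsto (deriv (lowerRoot E L₀ ρ)) (𝓝[>] x₀) atBot := by
  have hcenter := hB.contDiffAt _ hB.center_mem_box
  have hgraph : Tendsto (fun x => (x, lowerRoot E L₀ ρ x)) (𝓝[>] x₀) (𝓝 (x₀, L₀)) :=
    (tendsto_id.mono_left nhdsWithin_le_nhds).prodMk_nhds hB.tendsto_lowerRoot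
  have hnum : Tendsto (fun x => -partialFst E (x, lowerRoot E L₀ ρ x)) (𝓝[>] x₀)
      (𝓝 (-partialFst E (x₀, L₀))) :=
    ((contDiffAt_partialFst hcenter one_add_one_eq_two.le).continuousAt.tendsto.comp hgraph).neg
  have hden : Tendsto (fun x => partialSnd E (x, lowerRoot E L₀ ρ x)) (𝓝[>] x₀) (𝓝[<] 0) := by
    refine tendsto_nhdsWithin_iff.2 ⟨?_, eventually_of_mem hB.Ioo_mem_nhdsGT
      fun _ hx => hB.partialSnd_lowerRoot_neg hx⟩
    simpa only [hB.partialSnd_center, Function.comp_def] using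
      (differentiableAt_partialSnd hcenter).continuousAt.tendsto.comp hgraph
  refine (hnum.pos_mul_atBot (neg_pos.2 hB.partialFst_center_neg)
    (tendsto_inv_nhdsLT_zero.comp hden)).congr' ?_
  filter_upwards [hB.Ioo_mem_nhdsGT] with x hx
  rw [(hB.hasDerivAt_lowerRoot hx).deriv, div_eq_mul_inv]
  rfl

theorem tendsto_deriv_upperRoot (hB : IsFoldBox E x₀ L₀ δ ρ m) :
    Tendsto (deriv (upperRoot E L₀ ρ)) (𝓝[>] x₀) atTop := by
  have hcenter := hB.contDiffAt _ hB.center_mem_box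
  have hgraph : Tendsto (fun x => (x, upperRoot E L₀ ρ x)) (𝓝[>] x₀) (𝓝 (x₀, L₀)) :=
    (tendsto_id.mono_left nhdsWithin_le_nhds).prodMk_nhds hB.tendsto_upperRoot
  have hnum : Tendsto (fun x => -partialFst E (x, upperRoot E L₀ ρ x)) (𝓝[>] x₀)
      (𝓝 (-partialFst E (x₀, L₀))) :=
    ((contDiffAt_partialFst hcenter one_add_one_eq_two.le).continuousAt.tendsto.comp hgraph).neg
  have hden : Tendsto (fun x => partialSnd E (x, upperRoot E L₀ ρ x)) (𝓝[>] x₀) (𝓝[>] 0) := by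
    refine tendsto_nhdsWithin_iff.2 ⟨?_, eventually_of_mem hB.Ioo_mem_nhdsGT
      fun _ hx => hB.partialSnd_upperRoot_pos hx⟩
    simpa only [hB.partialSnd_center, Function.comp_def] using
      (differentiableAt_partialSnd hcenter).continuousAt.tendsto.comp hgraph
  refine (hnum.pos_mul_atTop (neg_pos.2 hB.partialFst_center_neg)
    (tendsto_inv_nhdsGT_zero.comp hden)).congr' ?_
  filter_upwards [hB.Ioo_mem_nhdsGT] with x hx
  rw [(hB.hasDerivAt_upperRoot hx).deriv, div_eq_mul_inv]
  rfl

theorem tendsto_sub_div_sqrt (hB : IsFoldBox E x₀ L₀ δ ρ m) :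
    Tendsto (fun x => (upperRoot E L₀ ρ x - lowerRoot E L₀ ρ x) / √(x - x₀)) (𝓝[>] x₀)
      (𝓝 (2 * √(-partialFst E (x₀, L₀) / (partialSnd (partialSnd E) (x₀, L₀) / 2)))) := by
  have hup := (hB.tendsto_sq_div_of_apply_eq_zero hB.upperRoot_mem_and_apply_eq_zero).div_sqrt_of_sq_div
    (eventually_of_mem hB.Ioo_mem_nhdsGT fun _ hx => sub_nonneg.2 (hB.upperRoot_spec hx).1.1.le)
  have hlo := hB.tendsto_sq_div_of_apply_eq_zero hB.lowerRoot_mem_and_apply_eq_zero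
  simp_rw [← neg_sub L₀, neg_sq] at hlo
  have hlo' := hlo.div_sqrt_of_sq_div
    (eventually_of_mem hB.Ioo_mem_nhdsGT fun _ hx => sub_nonneg.2 (hB.lowerRoot_spec hx).1.2.le)
  rw [two_mul]
  refine (hup.add hlo').congr fun x => ?_
  rw [← add_div]
  ring_nf

end IsFoldBox

theorem exists_isFoldBox {E : ℝ × ℝ → ℝ} {x₀ L₀ : ℝ}
    (hE : ∀ᶠ p in 𝓝 (x₀, L₀), ContDiffAt ℝ 2 E p) (h0 : E (x₀, L₀) = 0)
    (h1 : partialSnd E (x₀, L₀) = 0) (h2 : 0 < partialSnd (partialSnd E) (x₀, L₀))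
    (hx : partialFst E (x₀, L₀) < 0) : ∃ δ ρ m, IsFoldBox E x₀ L₀ δ ρ m := by
  obtain ⟨ρ, hρ, hball⟩ := Metric.nhds_basis_closedBall.eventually_iff.1
    (hE.and ((continuousAt_partialSnd_partialSnd hE.self_of_nhds).eventually
      (lt_mem_nhds (half_lt_self h2))))
  have hbox : ∀ p ∈ Icc (x₀ - ρ) (x₀ + ρ) ×ˢ Icc (L₀ - ρ) (L₀ + ρ),
      ContDiffAt ℝ 2 E p ∧ partialSnd (partialSnd E) (x₀, L₀) / 2 < partialSnd (partialSnd E) p :=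
    fun p hp => hball (by
      rwa [← closedBall_prod_same, Real.closedBall_eq_Icc, Real.closedBall_eq_Icc])
  have hx₀ : x₀ ∈ Icc (x₀ - ρ) (x₀ + ρ) := ⟨by linarith, by linarith⟩
  have hedge : ∀ L ∈ Icc (L₀ - ρ) (L₀ + ρ), L ≠ L₀ → ∀ᶠ x in 𝓝[>] x₀, 0 < E (x, L) := by
    intro L hL hne
    have hE₀ : 0 < E (x₀, L) := apply_slice_pos_of_ne ordConnected_Icc
      ⟨by linarith, by linarith⟩ hL (fun L' hL' => (hbox _ ⟨hx₀, hL'⟩).1)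
      (fun L' hL' => (half_pos h2).trans (hbox _ ⟨hx₀, hL'⟩).2) h0 h1 hne
    exact nhdsWithin_le_nhds (((hbox _ ⟨hx₀, hL⟩).1.continuousAt.tendsto.comp
      ((continuous_id.prodMk continuous_const).tendsto x₀)).eventually (lt_mem_nhds hE₀))
  have hcenter : ∀ᶠ x in 𝓝[>] x₀, E (x, L₀) < 0 :=
    (hasDerivAt_partialFst (hE.self_of_nhds.differentiableAt two_ne_zero)).eventually_neg_nhdsGT
      h0 hx
  obtain ⟨u, hu, hsub⟩ := mem_nhdsGT_iff_exists_Ioo_subset.1 (hcenter.and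
    ((hedge (L₀ - ρ) ⟨le_rfl, by linarith⟩ (by linarith)).and
      (hedge (L₀ + ρ) ⟨by linarith, le_rfl⟩ (by linarith))))
  have hI : ∀ x ∈ Ioo x₀ (x₀ + min (u - x₀) ρ), x ∈ Ioo x₀ u :=
    fun x hx => ⟨hx.1, by linarith [hx.2, min_le_left (u - x₀) ρ]⟩
  exact ⟨min (u - x₀) ρ, ρ, _,
    { apply_center := h0
      partialSnd_center := h1
      partialFst_center_neg := hx
      δ_pos := lt_min (sub_pos.2 hu) hρ
      δ_le := min_le_right _ _
      contDiffAt := fun p hp => (hbox p hp).1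
      m_pos := half_pos h2
      le_partialSnd_partialSnd := fun p hp => (hbox p hp).2.le
      neg_on_center_line := fun x hx => (hsub (hI x hx)).1
      pos_on_lower_edge := fun x hx => (hsub (hI x hx)).2.1
      pos_on_upper_edge := fun x hx => (hsub (hI x hx)).2.2 }⟩

/-- Near a degenerate root `(x₀, L₀)` of the eclipsing function
`E` with `∂E/∂L = 0`, `∂²E/∂L² > 0`, `∂E/∂x < 0`, for `x` slightly larger than
`x₀` there are exactly two C¹ root branches `L₋(x) < L₊(x)` merging at `L₀` as
`x → x₀⁺`, whose derivatives blow up to `∓∞`, and whose separation satisfies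
`(L₊ - L₋)/√(x - x₀) → 2√(2|∂E/∂x|/∂²E/∂L²)`: the Leibniz boundary terms of the
averaged costate dynamics become singular as an eclipse arc vanishes. -/
theorem eclipse_root_branches_singularity
    (E : ℝ × ℝ → ℝ) (x₀ L₀ : ℝ)
    (hC2 : ∃ U ∈ 𝓝 (x₀, L₀), ContDiffOn ℝ 2 E U)
    (h0 : E (x₀, L₀) = 0)
    (hEL : deriv (fun L => E (x₀, L)) L₀ = 0)
    (hELL : 0 < deriv (deriv (fun L => E (x₀, L))) L₀)
    (hEx : deriv (fun x => E (x, L₀)) x₀ < 0) :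
    ∃ δ > 0, ∃ ρ > 0, ∃ Lm Lp : ℝ → ℝ,
      ContDiffOn ℝ 1 Lm (Set.Ioo x₀ (x₀ + δ)) ∧
      ContDiffOn ℝ 1 Lp (Set.Ioo x₀ (x₀ + δ)) ∧
      (∀ x ∈ Set.Ioo x₀ (x₀ + δ),
        Lm x < Lp x ∧
        Lm x ∈ Set.Ioo (L₀ - ρ) (L₀ + ρ) ∧
        Lp x ∈ Set.Ioo (L₀ - ρ) (L₀ + ρ) ∧
        {L ∈ Set.Ioo (L₀ - ρ) (L₀ + ρ) | E (x, L) = 0} = {Lm x, Lp x}) ∧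
      Tendsto Lm (𝓝[>] x₀) (𝓝 L₀) ∧
      Tendsto Lp (𝓝[>] x₀) (𝓝 L₀) ∧
      Tendsto (deriv Lp) (𝓝[>] x₀) atTop ∧
      Tendsto (deriv Lm) (𝓝[>] x₀) atBot ∧
      Tendsto (fun x => (Lp x - Lm x) / Real.sqrt (x - x₀)) (𝓝[>] x₀)
        (𝓝 (2 * Real.sqrt (2 * |deriv (fun x => E (x, L₀)) x₀| /
          deriv (deriv (fun L => E (x₀, L))) L₀))) := by
  obtain ⟨U, hU, hEU⟩ := hC2
  have hE : ∀ᶠ p in 𝓝 (x₀, L₀), ContDiffAt ℝ 2 E p :=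
    (eventually_mem_nhds_iff.2 hU).mono fun _ hp => hEU.contDiffAt hp
  have hd := hE.self_of_nhds.differentiableAt two_ne_zero
  rw [(hasDerivAt_partialSnd hd).deriv] at hEL
  rw [(hasDerivAt_partialFst hd).deriv] at hEx ⊢
  rw [deriv_deriv_slice hE] at hELL ⊢
  obtain ⟨δ, ρ, m, hB⟩ := exists_isFoldBox hE h0 hEL hELL hEx
  refine ⟨δ, hB.δ_pos, ρ, hB.ρ_pos, lowerRoot E L₀ ρ, upperRoot E L₀ ρ,
    fun x hx => ((hB.contDiffAt_lowerRoot hx).of_le one_le_two).contDiffWithinAt,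
    fun x hx => ((hB.contDiffAt_upperRoot hx).of_le one_le_two).contDiffWithinAt,
    fun x hx => ⟨(hB.lowerRoot_spec hx).1.2.trans (hB.upperRoot_spec hx).1.1,
      hB.lowerRoot_mem_Ioo hx, hB.upperRoot_mem_Ioo hx, hB.zeroSet_eq hx⟩,
    hB.tendsto_lowerRoot, hB.tendsto_upperRoot, hB.tendsto_deriv_upperRoot,
    hB.tendsto_deriv_lowerRoot, ?_⟩
  convert hB.tendsto_sub_div_sqrt using 4
  rw [abs_of_neg hEx]
  ring
end
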